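/- arXiv:1602.09116 — 5 statements merged into one kernel-verified Lean document; each statement's English description precedes it below -/
import Mathlib

section
/- Let W(0) be a random variable taking values in a countable subset of ℝ^D, independent of the sequence (X_k)_{k≥1}, and set W(n) = W(0) + S(n) for n ≥ 1. Let λ, Λ ∈ C̄ with Λ − λ ∈ S, let i ≥ 0, and assume ℙ({W(i) = λ} ∩ {W(n) ∈ C̄ for all n ≥ 0}) > 0. Then the conditional probability ℙ(W(i+1) = Λ | W(i) = λ and W(n) ∈ C̄ for all n ≥ 0) equals ν({Λ − λ}) · h(Λ)/h(λ), where h(μ) = ℙ(μ + S(k) ∈ C̄ for all k ≥ 1). -/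
/-!
On `{W(i) = λ}` the event that the walk stays in `C̄` splits as the event that `W(0), …, W(i)`
lie in `C̄`, which only involves `W(0)` and the first `i` steps, and the event that
`λ + X_{i+1} + ⋯ + X_{i+n} ∈ C̄` for all `n ≥ 1`, which only involves the later steps. The two
are independent, and since the steps are i.i.d. the second one has probability `h(λ)`.
Adding `W(i+1) = Λ` splits off one more independent factor `ν({Λ - λ})` and turns the second
event into the one for `Λ`, of probability `h(Λ)`; the probability of the first event cancels.
-/

open MeasureTheory ProbabilityTheory MeasurableSpace Finset Filter

namespace ProbabilityTheory

theorem indep_sup_left_of_indep_sup {Ω : Type*} {mΩ : MeasurableSpace Ω} {μ : Measure Ω}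
    [IsZeroOrProbabilityMeasure μ] {m₀ m₁ m₂ : MeasurableSpace Ω}
    (h₀ : m₀ ≤ mΩ) (h₁ : m₁ ≤ mΩ) (h₂ : m₂ ≤ mΩ)
    (h₀₁₂ : Indep m₀ (m₁ ⊔ m₂) μ) (h₁₂ : Indep m₁ m₂ μ) : Indep (m₀ ⊔ m₁) m₂ μ := by
  set p : Set (Set Ω) := Set.image2 (· ∩ ·) {s | MeasurableSet[m₀] s} {t | MeasurableSet[m₁] t}
  have hp : IsPiSystem p := by
    rintro _ ⟨s, hs, t, ht, rfl⟩ _ ⟨s', hs', t', ht', rfl⟩ -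
    exact ⟨s ∩ s', hs.inter hs', t ∩ t', ht.inter ht', by ac_rfl⟩
  have hgen : m₀ ⊔ m₁ = generateFrom p := by
    refine le_antisymm (sup_le ?_ ?_) (generateFrom_le ?_)
    · intro s hs
      exact measurableSet_generateFrom ⟨s, hs, Set.univ, MeasurableSet.univ, Set.inter_univ s⟩
    · intro t ht
      exact measurableSet_generateFrom ⟨Set.univ, MeasurableSet.univ, t, ht, Set.univ_inter t⟩
    · rintro _ ⟨s, hs, t, ht, rfl⟩
      exact (le_sup_left (b := m₁) _ hs).inter (le_sup_right (a := m₀) _ ht)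
  refine IndepSets.indep (sup_le h₀ h₁) h₂ hp (@isPiSystem_measurableSet Ω m₂) hgen
    generateFrom_measurableSet.symm ((IndepSets_iff _ _ _).2 ?_)
  rintro _ u ⟨s, hs, t, ht, rfl⟩ hu
  have h₀' := (Indep_iff _ _ _).1 h₀₁₂
  calc μ (s ∩ t ∩ u) = μ s * (μ t * μ u) := by
        rw [Set.inter_assoc, h₀' s _ hs ((le_sup_left (b := m₂) _ ht).inter
          (le_sup_right (a := m₁) _ hu)), (Indep_iff _ _ _).1 h₁₂ t u ht hu]
    _ = μ (s ∩ t) * μ u := by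
        rw [h₀' s t hs (le_sup_left (b := m₂) _ ht), mul_assoc]

theorem iIndepFun.map_eq_infinitePi {Ω α : Type*} {mΩ : MeasurableSpace Ω} [MeasurableSpace α]
    {P : Measure Ω} {ν : Measure α} [IsProbabilityMeasure ν] {X : ℕ → Ω → α}
    (hXindep : iIndepFun X P) (hX : ∀ k, Measurable (X k))
    (hXdist : ∀ k, P.map (X k) = ν) :
    P.map (fun ω k => X k ω) = Measure.infinitePi fun _ => ν := by
  simp [hXindep.map_fun_eq_infinitePi_map hX, hXdist]

theorem iIndepFun.measure_preimage_shift {Ω α : Type*} {mΩ : MeasurableSpace Ω}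
    [MeasurableSpace α] {P : Measure Ω} {ν : Measure α} [IsProbabilityMeasure ν]
    {X : ℕ → Ω → α} (hXindep : iIndepFun X P) (hX : ∀ k, Measurable (X k))
    (hXdist : ∀ k, P.map (X k) = ν) (j : ℕ) {B : Set (ℕ → α)} (hB : MeasurableSet B) :
    P ((fun ω k => X (j + k) ω) ⁻¹' B) = P ((fun ω k => X k ω) ⁻¹' B) := by
  rw [← Measure.map_apply (measurable_pi_iff.2 fun k => hX (j + k)) hB,
    ← Measure.map_apply (measurable_pi_iff.2 hX) hB,
    (hXindep.precomp (add_right_injective j)).map_eq_infinitePi (fun k => hX (j + k))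
      (fun k => hXdist (j + k)), hXindep.map_eq_infinitePi hX hXdist]

end ProbabilityTheory

theorem Set.Countable.addSubmonoidClosure {M : Type*} [AddMonoid M] {s : Set M}
    (hs : s.Countable) : (AddSubmonoid.closure s : Set M).Countable := by
  have := hs.to_subtype
  rw [AddSubmonoid.closure_eq_mrange, AddMonoidHom.coe_mrange]
  exact Set.countable_range _

section RandomWalk

variable {α Ω : Type*}

def walkStaysIn [AddCommMonoid α] (C : Set α) (x₀ : α) : Set (ℕ → α) :=
  {x | ∀ n, 1 ≤ n → x₀ + ∑ k ∈ range n, x k ∈ C}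

theorem forall_add_sum_mem_iff [AddCommMonoid α] (C : Set α) (w : α) (x : ℕ → α) (i : ℕ) :
    (∀ n, w + ∑ k ∈ range n, x k ∈ C) ↔
      (∀ n ≤ i, w + ∑ k ∈ range n, x k ∈ C) ∧
        (fun k => x (i + k)) ∈ walkStaysIn C (w + ∑ k ∈ range i, x k) := by
  simp only [walkStaysIn, Set.mem_ofPred_eq, add_assoc, ← sum_range_add]
  refine ⟨fun h => ⟨fun n _ => h n, fun n _ => h (i + n)⟩, fun ⟨hle, hgt⟩ n => ?_⟩
  rcases le_or_gt n i with hn | hn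
  · exact hle n hn
  · simpa [Nat.add_sub_cancel' hn.le] using hgt (n - i) (by omega)

theorem add_sum_eq_and_forall_mem_iff [AddCommMonoid α] (C : Set α) (w lam : α) (x : ℕ → α)
    (i : ℕ) :
    (w + ∑ k ∈ range i, x k = lam ∧ ∀ n, w + ∑ k ∈ range n, x k ∈ C) ↔
      (w + ∑ k ∈ range i, x k = lam ∧ ∀ n ≤ i, w + ∑ k ∈ range n, x k ∈ C) ∧
        (fun k => x (i + k)) ∈ walkStaysIn C lam := by
  rw [forall_add_sum_mem_iff C w x i]
  constructor
  · rintro ⟨rfl, hle, hgt⟩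
    exact ⟨⟨rfl, hle⟩, hgt⟩
  · rintro ⟨⟨rfl, hle⟩, hgt⟩
    exact ⟨rfl, hle, hgt⟩

theorem add_sum_succ_eq_and_forall_mem_iff [AddCommGroup α] {C : Set α} {lam Lam : α}
    (hLam : Lam ∈ C) (w : α) (x : ℕ → α) (i : ℕ) :
    (w + ∑ k ∈ range (i + 1), x k = Lam ∧ w + ∑ k ∈ range i, x k = lam ∧
        ∀ n, w + ∑ k ∈ range n, x k ∈ C) ↔
      ((w + ∑ k ∈ range i, x k = lam ∧ ∀ n ≤ i, w + ∑ k ∈ range n, x k ∈ C) ∧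
          x i = Lam - lam) ∧
        (fun k => x (i + 1 + k)) ∈ walkStaysIn C Lam := by
  rw [forall_add_sum_mem_iff C w x (i + 1), sum_range_succ, ← add_assoc]
  constructor
  · rintro ⟨rfl, rfl, hle, hgt⟩
    exact ⟨⟨⟨rfl, fun n hn => hle n (by omega)⟩, (add_sub_cancel_left _ _).symm⟩, hgt⟩
  · rintro ⟨⟨⟨rfl, hle⟩, hxi⟩, hgt⟩
    have hLam' : w + ∑ k ∈ range i, x k + x i = Lam := by rw [hxi, add_sub_cancel]
    refine ⟨hLam', rfl, fun n hn => ?_, hLam' ▸ hgt⟩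
    rcases Nat.of_le_succ hn with hn | rfl
    · exact hle n hn
    · rwa [sum_range_succ, ← add_assoc, hLam']

variable [MeasurableSpace α] {mΩ : MeasurableSpace Ω}

theorem measurableSet_walkStaysIn [AddCommMonoid α] [MeasurableAdd₂ α] {C : Set α}
    (hC : MeasurableSet C) (x₀ : α) : MeasurableSet (walkStaysIn C x₀) := by
  simp only [walkStaysIn, Set.ofPred_forall]
  exact .iInter fun n => .iInter fun _ =>
    measurableSet_preimage (measurable_const.add
      (Finset.measurable_sum _ fun k _ => measurable_pi_apply k)) hC

abbrev walkPast (W₀ : Ω → α) (X : ℕ → Ω → α) (i : ℕ) : MeasurableSpace Ω :=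
  MeasurableSpace.comap W₀ ‹_› ⊔ ⨆ k ∈ Set.Iio i, MeasurableSpace.comap (X k) ‹_›

abbrev walkFuture (X : ℕ → Ω → α) (i : ℕ) : MeasurableSpace Ω :=
  ⨆ k ∈ Set.Ici i, MeasurableSpace.comap (X k) ‹_›

theorem walkPast_mono (W₀ : Ω → α) (X : ℕ → Ω → α) : Monotone (walkPast W₀ X) :=
  fun _ _ hij => sup_le_sup_left (biSup_mono fun _ hk => lt_of_lt_of_le hk hij) _

theorem measurable_walkPast_add_sum [AddCommMonoid α] [MeasurableAdd₂ α] (W₀ : Ω → α)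
    (X : ℕ → Ω → α) {i n : ℕ} (hn : n ≤ i) :
    Measurable[walkPast W₀ X i] fun ω => W₀ ω + ∑ k ∈ range n, X k ω := by
  refine Measurable.add ((comap_measurable W₀).mono le_sup_left le_rfl)
    (Finset.measurable_sum _ fun k hk => (comap_measurable (X k)).mono ?_ le_rfl)
  exact le_sup_of_le_right
    (le_iSup₂ (f := fun k (_ : k ∈ Set.Iio i) => MeasurableSpace.comap (X k) _) k
      (by simp at hk ⊢; omega))

theorem measurable_walkPast_step (W₀ : Ω → α) (X : ℕ → Ω → α) (i : ℕ) :
    Measurable[walkPast W₀ X (i + 1)] (X i) :=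
  (comap_measurable (X i)).mono (le_sup_of_le_right
    (le_iSup₂ (f := fun k (_ : k ∈ Set.Iio (i + 1)) => MeasurableSpace.comap (X k) _) i
      (by simp))) le_rfl

theorem measurable_walkFuture (X : ℕ → Ω → α) {i k : ℕ} (hk : i ≤ k) :
    Measurable[walkFuture X i] (X k) :=
  (comap_measurable (X k)).mono
    (le_iSup₂ (f := fun k (_ : k ∈ Set.Ici i) => MeasurableSpace.comap (X k) _) k hk) le_rfl

theorem measurable_walkFuture_shift (X : ℕ → Ω → α) (j : ℕ) :
    Measurable[walkFuture X j] fun ω k => X (j + k) ω :=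
  @measurable_pi_lambda _ _ _ (walkFuture X j) _ _ fun _ => measurable_walkFuture X (by omega)

theorem indep_walkPast_walkFuture {P : Measure Ω} [IsZeroOrProbabilityMeasure P] {W₀ : Ω → α}
    {X : ℕ → Ω → α} (hW₀ : Measurable W₀) (hX : ∀ k, Measurable (X k))
    (hXindep : iIndepFun X P) (hW₀indep : IndepFun W₀ (fun ω k => X k ω) P) (i : ℕ) :
    Indep (walkPast W₀ X i) (walkFuture X i) P := by
  have hXY : ∀ k, MeasurableSpace.comap (X k) ‹_›
      ≤ MeasurableSpace.comap (fun ω k => X k ω) MeasurableSpace.pi := fun k =>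
    ((measurable_pi_apply k).comp (comap_measurable (fun ω k => X k ω))).comap_le
  refine indep_sup_left_of_indep_sup hW₀.comap_le (iSup₂_le fun k _ => (hX k).comap_le)
    (iSup₂_le fun k _ => (hX k).comap_le) ?_
    (indep_iSup_of_disjoint (fun k => (hX k).comap_le) hXindep.iIndep
      (Set.Iio_disjoint_Ici le_rfl))
  exact indep_of_indep_of_le_right ((IndepFun_iff_Indep _ _ _).1 hW₀indep)
    (sup_le (iSup₂_le fun k _ => hXY k) (iSup₂_le fun k _ => hXY k))

theorem ae_forall_sum_range_mem [AddCommMonoid α] {P : Measure Ω} {ν : Measure α}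
    {X : ℕ → Ω → α} (hX : ∀ k, Measurable (X k)) (hXdist : ∀ k, P.map (X k) = ν)
    {M : AddSubmonoid α} (hM : ∀ᵐ x ∂ν, x ∈ M) :
    ∀ᵐ ω ∂P, ∀ n, ∑ k ∈ range n, X k ω ∈ M :=
  (ae_all_iff.2 fun k => ae_of_ae_map (hX k).aemeasurable (hXdist k ▸ hM)).mono
    fun _ hω _ => M.sum_mem fun k _ => hω k

theorem walk_transition_eq_of_measurableSet [AddCommGroup α] [MeasurableAdd₂ α]
    [MeasurableSingletonClass α] {P : Measure Ω} [IsProbabilityMeasure P] {ν : Measure α}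
    [IsProbabilityMeasure ν] {X : ℕ → Ω → α} (hX : ∀ k, Measurable (X k))
    (hXindep : iIndepFun X P) (hXdist : ∀ k, P.map (X k) = ν) {W₀ : Ω → α}
    (hW₀ : Measurable W₀) (hW₀indep : IndepFun W₀ (fun ω k => X k ω) P) {C : Set α}
    (hC : MeasurableSet C) (lam Lam : α) (hLam : Lam ∈ C) (i : ℕ)
    (hpos : 0 < P ({ω | W₀ ω + ∑ k ∈ range i, X k ω = lam}
        ∩ {ω | ∀ n, W₀ ω + ∑ k ∈ range n, X k ω ∈ C})) :
    P ({ω | W₀ ω + ∑ k ∈ range (i + 1), X k ω = Lam}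
        ∩ ({ω | W₀ ω + ∑ k ∈ range i, X k ω = lam}
          ∩ {ω | ∀ n, W₀ ω + ∑ k ∈ range n, X k ω ∈ C}))
      / P ({ω | W₀ ω + ∑ k ∈ range i, X k ω = lam}
          ∩ {ω | ∀ n, W₀ ω + ∑ k ∈ range n, X k ω ∈ C})
    = ν {Lam - lam} * P ((fun ω k => X k ω) ⁻¹' walkStaysIn C Lam)
        / P ((fun ω k => X k ω) ⁻¹' walkStaysIn C lam) := by
  set A := {ω | W₀ ω + ∑ k ∈ range i, X k ω = lam}
    ∩ {ω | ∀ n ≤ i, W₀ ω + ∑ k ∈ range n, X k ω ∈ C}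
  have hA : MeasurableSet[walkPast W₀ X i] A := by
    refine (measurable_walkPast_add_sum W₀ X le_rfl (measurableSet_singleton lam)).inter ?_
    simp only [Set.ofPred_forall]
    exact .iInter fun n => .iInter fun hn => measurable_walkPast_add_sum W₀ X hn hC
  have hindep := fun j => (Indep_iff _ _ _).1 (indep_walkPast_walkFuture hW₀ hX hXindep hW₀indep j)
  have hfactor : ∀ j (B : Set Ω), MeasurableSet[walkPast W₀ X j] B → ∀ x₀,
      P (B ∩ (fun ω k => X (j + k) ω) ⁻¹' walkStaysIn C x₀)
        = P B * P ((fun ω k => X k ω) ⁻¹' walkStaysIn C x₀) := fun j B hB x₀ => by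
    rw [hindep j _ _ hB (measurable_walkFuture_shift X j (measurableSet_walkStaysIn hC x₀)),
      hXindep.measure_preimage_shift hX hXdist j (measurableSet_walkStaysIn hC x₀)]
  have hstep : P (A ∩ X i ⁻¹' {Lam - lam}) = P A * ν {Lam - lam} := by
    rw [hindep i _ _ hA (measurable_walkFuture X le_rfl (measurableSet_singleton _)),
      ← Measure.map_apply (hX i) (measurableSet_singleton _), hXdist]
  have hden : {ω | W₀ ω + ∑ k ∈ range i, X k ω = lam}
        ∩ {ω | ∀ n, W₀ ω + ∑ k ∈ range n, X k ω ∈ C}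
      = A ∩ (fun ω k => X (i + k) ω) ⁻¹' walkStaysIn C lam := by
    ext ω
    exact add_sum_eq_and_forall_mem_iff C (W₀ ω) lam (fun k => X k ω) i
  have hnum : {ω | W₀ ω + ∑ k ∈ range (i + 1), X k ω = Lam}
        ∩ ({ω | W₀ ω + ∑ k ∈ range i, X k ω = lam}
          ∩ {ω | ∀ n, W₀ ω + ∑ k ∈ range n, X k ω ∈ C})
      = (A ∩ X i ⁻¹' {Lam - lam}) ∩ (fun ω k => X (i + 1 + k) ω) ⁻¹' walkStaysIn C Lam := by
    ext ω
    exact add_sum_succ_eq_and_forall_mem_iff hLam (W₀ ω) (fun k => X k ω) i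
  have hA0 : P A ≠ 0 := by
    rintro h
    rw [hden, hfactor i A hA, h, zero_mul] at hpos
    exact hpos.false
  rw [hnum, hden, hfactor (i + 1) _ ((walkPast_mono W₀ X i.le_succ _ hA).inter
      (measurable_walkPast_step W₀ X i (measurableSet_singleton _))),
    hfactor i A hA, hstep, mul_assoc, ENNReal.mul_div_mul_left _ _ hA0 (measure_ne_top P A)]

end RandomWalk

theorem stmt_4_general
    (D : ℕ)
    (S : Finset (Fin D → ℝ))
    (ν : Measure (Fin D → ℝ)) [IsProbabilityMeasure ν]
    (hνS : ν (S : Set (Fin D → ℝ)) = 1)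
    {Ω : Type*} [MeasurableSpace Ω] (P : Measure Ω) [IsProbabilityMeasure P]
    (X : ℕ → Ω → (Fin D → ℝ)) (hXmeas : ∀ k, Measurable (X k))
    (hXindep : iIndepFun X P)
    (hXdist : ∀ k, Measure.map (X k) P = ν)
    (C : Set (Fin D → ℝ))
    (W0 : Ω → (Fin D → ℝ)) (hW0meas : Measurable W0)
    (hW0count : (Set.range W0).Countable)
    (hW0indep : IndepFun W0 (fun ω k => X k ω) P)
    (lam Lam : Fin D → ℝ) (hLam : Lam ∈ C)
    (i : ℕ)
    (hpos : 0 < P ({ω | W0 ω + (∑ k ∈ Finset.range i, X k ω) = lam}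
        ∩ {ω | ∀ n, W0 ω + (∑ k ∈ Finset.range n, X k ω) ∈ C})) :
    P ({ω | W0 ω + (∑ k ∈ Finset.range (i + 1), X k ω) = Lam}
        ∩ ({ω | W0 ω + (∑ k ∈ Finset.range i, X k ω) = lam}
          ∩ {ω | ∀ n, W0 ω + (∑ k ∈ Finset.range n, X k ω) ∈ C}))
      / P ({ω | W0 ω + (∑ k ∈ Finset.range i, X k ω) = lam}
          ∩ {ω | ∀ n, W0 ω + (∑ k ∈ Finset.range n, X k ω) ∈ C})
    = ν {Lam - lam}
        * P {ω | ∀ n, 1 ≤ n → Lam + (∑ k ∈ Finset.range n, X k ω) ∈ C}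
        / P {ω | ∀ n, 1 ≤ n → lam + (∑ k ∈ Finset.range n, X k ω) ∈ C} := by
  -- `C` need not be measurable; but almost surely every step lies in `S`, so the walks from
  -- `W0 ω`, `lam` and `Lam` only visit the countable monoid `M`, and `C ∩ M` may replace `C`.
  set M := AddSubmonoid.closure (Set.range W0 ∪ S ∪ {lam, Lam})
  have hCM : MeasurableSet (C ∩ M) :=
    (((hW0count.union S.countable_toSet).union (Set.toFinite _).countable).addSubmonoidClosure.mono
      Set.inter_subset_right).measurableSet
  have hsum : ∀ᵐ ω ∂P, ∀ n, ∑ k ∈ Finset.range n, X k ω ∈ M :=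
    ae_forall_sum_range_mem hXmeas hXdist <|
      ((ae_mem_iff_measure_eq (μ := ν) S.measurableSet.nullMeasurableSet).2
        (by rw [hνS, measure_univ])).mono fun x hx => AddSubmonoid.subset_closure (by simp [hx])
  have hwalk : {ω | ∀ n, W0 ω + ∑ k ∈ Finset.range n, X k ω ∈ C}
      =ᵐ[P] {ω | ∀ n, W0 ω + ∑ k ∈ Finset.range n, X k ω ∈ C ∩ M} :=
    hsum.mono fun ω hω => propext <| forall_congr' fun n =>
      (and_iff_left (M.add_mem (AddSubmonoid.subset_closure (by simp)) (hω n))).symm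
  have hstays : ∀ x₀ ∈ M, {ω | ∀ n, 1 ≤ n → x₀ + ∑ k ∈ Finset.range n, X k ω ∈ C}
      =ᵐ[P] (fun ω k => X k ω) ⁻¹' walkStaysIn (C ∩ M) x₀ := fun x₀ hx₀ =>
    hsum.mono fun ω hω => propext <| forall_congr' fun n => imp_congr_right fun _ =>
      (and_iff_left (M.add_mem hx₀ (hω n))).symm
  have hLamM : Lam ∈ M := AddSubmonoid.subset_closure (by simp)
  rw [measure_congr ((ae_eq_refl _).inter ((ae_eq_refl _).inter hwalk)),
    measure_congr ((ae_eq_refl _).inter hwalk), measure_congr (hstays Lam hLamM),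
    measure_congr (hstays lam (AddSubmonoid.subset_closure (by simp)))]
  rw [measure_congr ((ae_eq_refl _).inter hwalk)] at hpos
  exact walk_transition_eq_of_measurableSet hXmeas hXindep hXdist hW0meas hW0indep hCM lam Lam
    ⟨hLam, hLamM⟩ i hpos

/-- for the walk `W(n) = W(0) + S(n)` with `W(0)` countably valued and
independent of the steps, for `λ, Λ ∈ C̄` with `Λ - λ ∈ S` and
`ℙ({W(i) = λ} ∩ {W(n) ∈ C̄ ∀ n ≥ 0}) > 0`, the conditional probability
`ℙ(W(i+1) = Λ | W(i) = λ, W ∈ C̄)` equals `ν({Λ-λ})·h(Λ)/h(λ)`, where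
`h(μ) = ℙ(μ + S(k) ∈ C̄ for all k ≥ 1)`. -/
theorem stmt_4
    (D : ℕ) (hD : 1 ≤ D)
    (S : Finset (Fin D → ℝ)) (hSne : S.Nonempty)
    (ν : Measure (Fin D → ℝ)) [IsProbabilityMeasure ν]
    (hνpos : ∀ s ∈ S, 0 < ν {s}) (hνS : ν (S : Set (Fin D → ℝ)) = 1)
    {Ω : Type*} [MeasurableSpace Ω] (P : Measure Ω) [IsProbabilityMeasure P]
    (X : ℕ → Ω → (Fin D → ℝ)) (hXmeas : ∀ k, Measurable (X k))
    (hXindep : iIndepFun X P)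
    (hXdist : ∀ k, Measure.map (X k) P = ν)
    (C : Set (Fin D → ℝ)) (hCadd : ∀ x ∈ C, ∀ y ∈ C, x + y ∈ C)
    (W0 : Ω → (Fin D → ℝ)) (hW0meas : Measurable W0)
    (hW0count : (Set.range W0).Countable)
    (hW0indep : IndepFun W0 (fun ω k => X k ω) P)
    (lam Lam : Fin D → ℝ) (hlam : lam ∈ C) (hLam : Lam ∈ C) (hstep : Lam - lam ∈ S)
    (i : ℕ)
    (hpos : 0 < P ({ω | W0 ω + (∑ k ∈ Finset.range i, X k ω) = lam}
        ∩ {ω | ∀ n, W0 ω + (∑ k ∈ Finset.range n, X k ω) ∈ C})) :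
    P ({ω | W0 ω + (∑ k ∈ Finset.range (i + 1), X k ω) = Lam}
        ∩ ({ω | W0 ω + (∑ k ∈ Finset.range i, X k ω) = lam}
          ∩ {ω | ∀ n, W0 ω + (∑ k ∈ Finset.range n, X k ω) ∈ C}))
      / P ({ω | W0 ω + (∑ k ∈ Finset.range i, X k ω) = lam}
          ∩ {ω | ∀ n, W0 ω + (∑ k ∈ Finset.range n, X k ω) ∈ C})
    = ν {Lam - lam}
        * P {ω | ∀ n, 1 ≤ n → Lam + (∑ k ∈ Finset.range n, X k ω) ∈ C}
        / P {ω | ∀ n, 1 ≤ n → lam + (∑ k ∈ Finset.range n, X k ω) ∈ C} :=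
  stmt_4_general D S ν hνS P X hXmeas hXindep hXdist C W0 hW0meas hW0count hW0indep lam Lam hLam i
    hpos
end

section
/- Let W(0) be a random variable taking values in a countable subset of ℝ^D, independent of the sequence (X_k)_{k≥1}, and set W(n) = W(0) + S(n) for n ≥ 1. Let λ, Λ ∈ C̄ with Λ − λ ∈ S, let n ≥ 2 and 0 ≤ i ≤ n − 2, and assume ℙ({W(i) = λ} ∩ {W(k) ∈ C̄ for all 0 ≤ k ≤ n}) > 0. Then ℙ(W(i+1) = Λ | W(i) = λ and W(k) ∈ C̄ for all 0 ≤ k ≤ n) = ν({Λ − λ}) · ψ_{n−i−1}(Λ)/ψ_{n−i}(λ). In particular, this conditional transition probability depends on n and i only through n − i. -/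
/-!
On the event `{W(i) = λ}` the constraints `W(k) ∈ C̄` for `i < k ≤ n` read
`λ + X_{i+1} + ⋯ + X_k ∈ C̄`: a condition on the future increments alone. These are independent
of `(W(0), X_1, …, X_i)` and distributed like `(X_1, X_2, …)`, so numerator and denominator both
factor as the probability of the past part of the event times a `ψ`-probability; splitting off the
first future step contributes `ν({Λ - λ})`, and the past factor cancels.

`C̄` need not be measurable. Almost surely, however, the walks started at `W(0)`, `λ` and `Λ` only
visit a fixed countable set `Z` (the increments lie in the finite set `S`), so replacing `C̄` by
the measurable set `C̄ ∩ Z` changes none of the probabilities involved.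
-/

open MeasureTheory ProbabilityTheory Set

namespace ProbabilityTheory

variable {Ω : Type*} {mΩ : MeasurableSpace Ω} {μ : Measure Ω}

theorem indep_sup_left_of_indep_sup_right [IsZeroOrProbabilityMeasure μ]
    {m₁ m₂ m₃ : MeasurableSpace Ω} (h₁ : m₁ ≤ mΩ) (h₂ : m₂ ≤ mΩ) (h₃ : m₃ ≤ mΩ)
    (h₁₂₃ : Indep m₁ (m₂ ⊔ m₃) μ) (h₂₃ : Indep m₂ m₃ μ) : Indep (m₁ ⊔ m₂) m₃ μ := by
  let p : Set (Set Ω) := {s | ∃ a b, MeasurableSet[m₁] a ∧ MeasurableSet[m₂] b ∧ a ∩ b = s}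
  have hp : IsPiSystem p := by
    rintro _ ⟨a, b, ha, hb, rfl⟩ _ ⟨a', b', ha', hb', rfl⟩ -
    exact ⟨a ∩ a', b ∩ b', ha.inter ha', hb.inter hb', inter_inter_inter_comm a a' b b'⟩
  have hgen : m₁ ⊔ m₂ = MeasurableSpace.generateFrom p := by
    refine le_antisymm (sup_le (fun a ha => ?_) (fun b hb => ?_))
      (MeasurableSpace.generateFrom_le ?_)
    · exact MeasurableSpace.measurableSet_generateFrom
        ⟨a, univ, ha, MeasurableSet.univ, inter_univ a⟩
    · exact MeasurableSpace.measurableSet_generateFrom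
        ⟨univ, b, MeasurableSet.univ, hb, univ_inter b⟩
    · rintro _ ⟨a, b, ha, hb, rfl⟩
      exact (le_sup_left (b := m₂) a ha).inter (le_sup_right (a := m₁) b hb)
  refine IndepSets.indep (sup_le h₁ h₂) h₃ hp (@MeasurableSpace.isPiSystem_measurableSet Ω m₃)
    hgen (@MeasurableSpace.generateFrom_measurableSet Ω m₃).symm ((IndepSets_iff _ _ _).2 ?_)
  rintro _ c ⟨a, b, ha, hb, rfl⟩ hc
  rw [Indep_iff] at h₁₂₃ h₂₃
  have hbc : MeasurableSet[m₂ ⊔ m₃] (b ∩ c) :=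
    (le_sup_left (b := m₃) b hb).inter (le_sup_right (a := m₂) c hc)
  rw [inter_assoc, h₁₂₃ _ _ ha hbc, h₂₃ _ _ hb hc, h₁₂₃ _ _ ha (le_sup_left (b := m₃) b hb),
    mul_assoc]

end ProbabilityTheory

namespace RandomWalk

section Paths

variable {Ω E : Type*} [AddCommGroup E] {W0 : Ω → E} {X : ℕ → Ω → E}

/-- `ψ_m(z)` is the probability that the increment sequence lies in `staysIn C z m`. -/
def staysIn (C : Set E) (z : E) (m : ℕ) : Set (ℕ → E) :=
  {x | ∀ k, 1 ≤ k → k ≤ m → z + ∑ j ∈ Finset.range k, x j ∈ C}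

def pastEvent (W0 : Ω → E) (X : ℕ → Ω → E) (C : Set E) (z : E) (i n : ℕ) : Set Ω :=
  {ω | W0 ω + ∑ j ∈ Finset.range i, X j ω = z ∧
    ∀ k ≤ i, k ≤ n → W0 ω + ∑ j ∈ Finset.range k, X j ω ∈ C}

theorem forall_le_add_sum_mem_iff {C : Set E} {x : ℕ → E} {w z : E} {i : ℕ}
    (h : w + ∑ j ∈ Finset.range i, x j = z) (n : ℕ) :
    (∀ k ≤ n, w + ∑ j ∈ Finset.range k, x j ∈ C) ↔
      (∀ k ≤ i, k ≤ n → w + ∑ j ∈ Finset.range k, x j ∈ C) ∧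
        (fun k => x (i + k)) ∈ staysIn C z (n - i) := by
  have hsplit : ∀ k, w + ∑ j ∈ Finset.range (i + k), x j = z + ∑ j ∈ Finset.range k, x (i + j) :=
    fun k => by rw [Finset.sum_range_add, ← add_assoc, h]
  constructor
  · intro hC
    exact ⟨fun k _ hkn => hC k hkn, fun k _ hk => hsplit k ▸ hC _ (by omega)⟩
  · rintro ⟨hpast, hfuture⟩ k hkn
    rcases le_or_gt k i with hki | hik
    · exact hpast k hki hkn
    · obtain ⟨k, rfl⟩ := Nat.exists_eq_add_of_lt hik
      rw [add_assoc, hsplit]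
      exact hfuture _ (by omega) (by omega)

theorem staysIn_inter_head_eq {C : Set E} {z z' : E} (hz' : z' ∈ C) (m : ℕ) :
    staysIn C z m ∩ {x | x 0 = z' - z} =
      {x | x 0 = z' - z} ∩ (fun x k => x (1 + k)) ⁻¹' staysIn C z' (m - 1) := by
  ext x
  rw [inter_comm, mem_inter_iff, mem_inter_iff, and_congr_right_iff]
  intro hx
  have hsplit : ∀ k, z + ∑ j ∈ Finset.range (1 + k), x j = z' + ∑ j ∈ Finset.range k, x (1 + j) :=
    fun k => by rw [Finset.sum_range_add, Finset.sum_range_one, hx, ← add_assoc, add_sub_cancel]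
  constructor
  · intro hC k hk hkm
    exact hsplit k ▸ hC (1 + k) (by omega) (by omega)
  · intro hC k hk hkm
    obtain ⟨k, rfl⟩ := Nat.exists_eq_add_of_le hk
    rw [hsplit]
    rcases Nat.eq_zero_or_pos k with rfl | hk0
    · simpa using hz'
    · exact hC k hk0 (by omega)

theorem inter_forall_mem_eq_pastEvent_inter (C : Set E) (z : E) (i n : ℕ) :
    {ω | W0 ω + ∑ j ∈ Finset.range i, X j ω = z} ∩
        {ω | ∀ k, k ≤ n → W0 ω + ∑ j ∈ Finset.range k, X j ω ∈ C} =
      pastEvent W0 X C z i n ∩ (fun ω k => X (i + k) ω) ⁻¹' staysIn C z (n - i) := by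
  ext ω
  simp only [pastEvent, mem_inter_iff, mem_ofPred_eq, mem_preimage]
  constructor
  · rintro ⟨hz, hC⟩
    have := (forall_le_add_sum_mem_iff hz n).1 hC
    exact ⟨⟨hz, this.1⟩, this.2⟩
  · rintro ⟨⟨hz, hpast⟩, hfuture⟩
    exact ⟨hz, (forall_le_add_sum_mem_iff hz n).2 ⟨hpast, hfuture⟩⟩

theorem step_inter_forall_mem_eq_pastEvent_inter (C : Set E) (z z' : E) (i n : ℕ) :
    {ω | W0 ω + ∑ j ∈ Finset.range (i + 1), X j ω = z'} ∩
        ({ω | W0 ω + ∑ j ∈ Finset.range i, X j ω = z} ∩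
          {ω | ∀ k, k ≤ n → W0 ω + ∑ j ∈ Finset.range k, X j ω ∈ C}) =
      pastEvent W0 X C z i n ∩
        (fun ω k => X (i + k) ω) ⁻¹' (staysIn C z (n - i) ∩ {x | x 0 = z' - z}) := by
  rw [inter_forall_mem_eq_pastEvent_inter]
  ext ω
  have hstep : W0 ω + ∑ j ∈ Finset.range i, X j ω = z →
      (W0 ω + ∑ j ∈ Finset.range (i + 1), X j ω = z' ↔ X i ω = z' - z) := fun hz => by
    rw [Finset.sum_range_succ, ← add_assoc, hz, eq_sub_iff_add_eq']
  simp only [pastEvent, mem_inter_iff, mem_ofPred_eq, mem_preimage]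
  tauto

end Paths

section Independence

open MeasurableSpace

variable {Ω E : Type*} {mΩ : MeasurableSpace Ω} [MeasurableSpace E] {P : Measure Ω}
  {W0 : Ω → E} {X : ℕ → Ω → E}

abbrev pastSigma (W0 : Ω → E) (X : ℕ → Ω → E) (i : ℕ) : MeasurableSpace Ω :=
  MeasurableSpace.comap W0 inferInstance ⊔ ⨆ k ∈ Iio i, MeasurableSpace.comap (X k) inferInstance

theorem measurable_biSup_comap {T : Set ℕ} {k : ℕ} (hk : k ∈ T) :
    Measurable[⨆ j ∈ T, MeasurableSpace.comap (X j) inferInstance] (X k) :=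
  (comap_measurable (X k)).mono
    (le_iSup₂ (f := fun j (_ : j ∈ T) => MeasurableSpace.comap (X j) inferInstance) k hk) le_rfl

theorem measurable_pastSigma_of_lt {i k : ℕ} (hk : k < i) : Measurable[pastSigma W0 X i] (X k) :=
  (measurable_biSup_comap (T := Iio i) hk).mono le_sup_right le_rfl

theorem indep_pastSigma_comap_shift [IsProbabilityMeasure P] (hX : ∀ k, Measurable (X k))
    (hW0 : Measurable W0) (hXindep : iIndepFun X P) (hW0X : IndepFun W0 (fun ω k => X k ω) P)
    (i : ℕ) :
    Indep (pastSigma W0 X i) (MeasurableSpace.comap (fun ω k => X (i + k) ω) inferInstance) P := by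
  have hXk : ∀ k, Measurable[MeasurableSpace.comap (fun ω k => X k ω) inferInstance] (X k) :=
    fun k => (measurable_pi_apply k).comp (comap_measurable (fun ω k => X k ω))
  have hshift : Measurable[⨆ k ∈ Ici i, MeasurableSpace.comap (X k) inferInstance]
      (fun ω k => X (i + k) ω) :=
    @measurable_pi_lambda _ _ _ (_) _ _ fun k => measurable_biSup_comap (Nat.le_add_right i k)
  refine indep_sup_left_of_indep_sup_right hW0.comap_le (iSup₂_le fun k _ => (hX k).comap_le)
    (measurable_pi_lambda _ fun k => hX _).comap_le ?_ ?_
  · refine indep_of_indep_of_le_right hW0X (sup_le (iSup₂_le fun k _ => (hXk k).comap_le) ?_)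
    exact (@measurable_pi_lambda _ _ _ (_) _ _ fun k => hXk (i + k)).comap_le
  · exact indep_of_indep_of_le_right (indep_iSup_of_disjoint (fun k => (hX k).comap_le) hXindep
      (disjoint_left.2 fun k hk hk' => not_le.2 (mem_Iio.1 hk) hk')) hshift.comap_le

theorem map_shift_eq_map {ν : Measure E} (hX : ∀ k, Measurable (X k)) (hXindep : iIndepFun X P)
    (hXdist : ∀ k, P.map (X k) = ν) (i : ℕ) :
    P.map (fun ω k => X (i + k) ω) = P.map (fun ω k => X k ω) := by
  rw [(hXindep.precomp (add_right_injective i)).map_fun_eq_infinitePi_map fun k => hX _,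
    hXindep.map_fun_eq_infinitePi_map hX]
  simp only [hXdist]

theorem measure_inter_shift_preimage [IsProbabilityMeasure P] {ν : Measure E}
    (hX : ∀ k, Measurable (X k)) (hW0 : Measurable W0) (hXindep : iIndepFun X P)
    (hXdist : ∀ k, P.map (X k) = ν) (hW0X : IndepFun W0 (fun ω k => X k ω) P) {i : ℕ}
    {s : Set Ω} (hs : MeasurableSet[pastSigma W0 X i] s) {V : Set (ℕ → E)}
    (hV : MeasurableSet V) :
    P (s ∩ (fun ω k => X (i + k) ω) ⁻¹' V) = P s * P ((fun ω k => X k ω) ⁻¹' V) := by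
  rw [(Indep_iff _ _ _).1 (indep_pastSigma_comap_shift hX hW0 hXindep hW0X i) _ _ hs ⟨V, hV, rfl⟩,
    ← Measure.map_apply (measurable_pi_lambda _ fun k => hX _) hV,
    map_shift_eq_map hX hXindep hXdist, Measure.map_apply (measurable_pi_lambda _ hX) hV]

theorem ae_forall_mem_of_map_eq [IsProbabilityMeasure ν] (hX : ∀ k, Measurable (X k))
    (hXdist : ∀ k, P.map (X k) = ν) {S : Set E} (hS : MeasurableSet S) (hνS : ν S = 1) :
    ∀ᵐ ω ∂P, ∀ k, X k ω ∈ S :=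
  ae_all_iff.2 fun k => ae_of_ae_map (hX k).aemeasurable
    (hXdist k ▸ mem_ae_iff.2 ((prob_compl_eq_zero_iff hS).2 hνS))

end Independence

section Transition

variable {Ω E : Type*} {mΩ : MeasurableSpace Ω} [MeasurableSpace E] [AddCommGroup E]
  [MeasurableAdd₂ E] {W0 : Ω → E} {X : ℕ → Ω → E}

theorem measurableSet_staysIn {C : Set E} (hC : MeasurableSet C) (z : E) (m : ℕ) :
    MeasurableSet (staysIn C z m) := by
  simp only [staysIn, ofPred_forall]
  exact .iInter fun k => .iInter fun _ => .iInter fun _ =>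
    hC.preimage (measurable_const.add (Finset.measurable_sum _ fun j _ => measurable_pi_apply j))

variable [MeasurableSingletonClass E]

theorem measurableSet_pastEvent {C : Set E} (hC : MeasurableSet C) (z : E) (i n : ℕ) :
    MeasurableSet[pastSigma W0 X i] (pastEvent W0 X C z i n) := by
  have hW : ∀ k ≤ i, Measurable[pastSigma W0 X i] fun ω => W0 ω + ∑ j ∈ Finset.range k, X j ω :=
    fun k hk => ((comap_measurable W0).mono le_sup_left le_rfl).add
      (Finset.measurable_sum _ fun j hj => measurable_pastSigma_of_lt
        ((Finset.mem_range.1 hj).trans_le hk))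
  simp only [pastEvent, ofPred_and, ofPred_forall]
  exact (hW i le_rfl (measurableSet_singleton z)).inter
    (.iInter fun k => .iInter fun hk => .iInter fun _ => hW k hk hC)

variable {P : Measure Ω} [IsProbabilityMeasure P] {ν : Measure E}

theorem measure_preimage_staysIn_inter_head (hX : ∀ k, Measurable (X k)) (hW0 : Measurable W0)
    (hXindep : iIndepFun X P) (hXdist : ∀ k, P.map (X k) = ν)
    (hW0X : IndepFun W0 (fun ω k => X k ω) P) {C : Set E} (hC : MeasurableSet C) {z z' : E}
    (hz' : z' ∈ C) (m : ℕ) :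
    P ((fun ω k => X k ω) ⁻¹' (staysIn C z m ∩ {x | x 0 = z' - z})) =
      ν {z' - z} * P ((fun ω k => X k ω) ⁻¹' staysIn C z' (m - 1)) := by
  have hhead : MeasurableSet[pastSigma W0 X 1] ((fun ω k => X k ω) ⁻¹' {x | x 0 = z' - z}) :=
    measurable_pastSigma_of_lt one_pos (measurableSet_singleton _)
  rw [staysIn_inter_head_eq hz', preimage_inter]
  refine (measure_inter_shift_preimage hX hW0 hXindep hXdist hW0X hhead
    (measurableSet_staysIn hC _ _)).trans ?_
  rw [← hXdist 0, Measure.map_apply (hX 0) (measurableSet_singleton _)]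
  rfl

theorem measure_step_inter_div_eq (hX : ∀ k, Measurable (X k)) (hW0 : Measurable W0)
    (hXindep : iIndepFun X P) (hXdist : ∀ k, P.map (X k) = ν)
    (hW0X : IndepFun W0 (fun ω k => X k ω) P) {C : Set E} (hC : MeasurableSet C) {lam Lam : E}
    (hLam : Lam ∈ C) {n i : ℕ}
    (hpos : 0 < P ({ω | W0 ω + ∑ k ∈ Finset.range i, X k ω = lam} ∩
      {ω | ∀ k, k ≤ n → W0 ω + ∑ j ∈ Finset.range k, X j ω ∈ C})) :
    P ({ω | W0 ω + ∑ k ∈ Finset.range (i + 1), X k ω = Lam} ∩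
        ({ω | W0 ω + ∑ k ∈ Finset.range i, X k ω = lam} ∩
          {ω | ∀ k, k ≤ n → W0 ω + ∑ j ∈ Finset.range k, X j ω ∈ C})) /
      P ({ω | W0 ω + ∑ k ∈ Finset.range i, X k ω = lam} ∩
        {ω | ∀ k, k ≤ n → W0 ω + ∑ j ∈ Finset.range k, X j ω ∈ C}) =
    ν {Lam - lam} * P ((fun ω k => X k ω) ⁻¹' staysIn C Lam (n - i - 1)) /
      P ((fun ω k => X k ω) ⁻¹' staysIn C lam (n - i)) := by
  have hpast := measurableSet_pastEvent (W0 := W0) (X := X) hC lam i n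
  have hfactor := fun V (hV : MeasurableSet V) =>
    measure_inter_shift_preimage hX hW0 hXindep hXdist hW0X hpast hV
  have hhead : MeasurableSet {x : ℕ → E | x 0 = Lam - lam} :=
    measurable_pi_apply 0 (measurableSet_singleton _)
  rw [step_inter_forall_mem_eq_pastEvent_inter,
    hfactor _ ((measurableSet_staysIn hC _ _).inter hhead),
    measure_preimage_staysIn_inter_head hX hW0 hXindep hXdist hW0X hC hLam]
  rw [inter_forall_mem_eq_pastEvent_inter, hfactor _ (measurableSet_staysIn hC _ _)] at hpos ⊢
  exact ENNReal.mul_div_mul_left _ _ (left_ne_zero_of_mul hpos.ne') (measure_ne_top P _)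

end Transition

open Pointwise in
theorem exists_countable_ae_add_sum_mem {Ω E : Type*} {mΩ : MeasurableSpace Ω} [AddCommMonoid E]
    {P : Measure Ω} {X : ℕ → Ω → E} {S R : Set E} (hS : S.Countable) (hR : R.Countable)
    (hXS : ∀ᵐ ω ∂P, ∀ k, X k ω ∈ S) :
    ∃ Z : Set E, Z.Countable ∧ R ⊆ Z ∧
      ∀ᵐ ω ∂P, ∀ z ∈ R, ∀ k, z + ∑ j ∈ Finset.range k, X j ω ∈ Z := by
  have hclosure : (AddSubmonoid.closure S : Set E).Countable := by
    have := hS.to_subtype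
    rw [AddSubmonoid.closure_eq_mrange, AddMonoidHom.coe_mrange]
    exact countable_range _
  refine ⟨R + AddSubmonoid.closure S, hR.image2 hclosure _,
    fun z hz => add_zero z ▸ add_mem_add hz (zero_mem _), hXS.mono fun ω hω z hz k => ?_⟩
  exact add_mem_add hz (sum_mem fun j _ => AddSubmonoid.subset_closure (hω j))

end RandomWalk

open RandomWalk

theorem stmt_5_general
    (D : ℕ)
    (S : Finset (Fin D → ℝ))
    (ν : Measure (Fin D → ℝ)) [IsProbabilityMeasure ν]
    (hνS : ν (S : Set (Fin D → ℝ)) = 1)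
    {Ω : Type*} [MeasurableSpace Ω] (P : Measure Ω) [IsProbabilityMeasure P]
    (X : ℕ → Ω → (Fin D → ℝ)) (hXmeas : ∀ k, Measurable (X k))
    (hXindep : iIndepFun X P)
    (hXdist : ∀ k, Measure.map (X k) P = ν)
    (C : Set (Fin D → ℝ))
    (W0 : Ω → (Fin D → ℝ)) (hW0meas : Measurable W0)
    (hW0count : (Set.range W0).Countable)
    (hW0indep : IndepFun W0 (fun ω k => X k ω) P)
    (lam Lam : Fin D → ℝ) (hLam : Lam ∈ C)
    (n i : ℕ)
    (hpos : 0 < P ({ω | W0 ω + (∑ k ∈ Finset.range i, X k ω) = lam}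
        ∩ {ω | ∀ k, k ≤ n → W0 ω + (∑ j ∈ Finset.range k, X j ω) ∈ C})) :
    P ({ω | W0 ω + (∑ k ∈ Finset.range (i + 1), X k ω) = Lam}
        ∩ ({ω | W0 ω + (∑ k ∈ Finset.range i, X k ω) = lam}
          ∩ {ω | ∀ k, k ≤ n → W0 ω + (∑ j ∈ Finset.range k, X j ω) ∈ C}))
      / P ({ω | W0 ω + (∑ k ∈ Finset.range i, X k ω) = lam}
          ∩ {ω | ∀ k, k ≤ n → W0 ω + (∑ j ∈ Finset.range k, X j ω) ∈ C})
    = ν {Lam - lam}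
        * P {ω | ∀ k, 1 ≤ k → k ≤ n - i - 1 →
              Lam + (∑ j ∈ Finset.range k, X j ω) ∈ C}
        / P {ω | ∀ k, 1 ≤ k → k ≤ n - i →
              lam + (∑ j ∈ Finset.range k, X j ω) ∈ C} := by
  obtain ⟨Z, hZ, hRZ, hZae⟩ := exists_countable_ae_add_sum_mem S.countable_toSet
    ((hW0count.insert Lam).insert lam) (ae_forall_mem_of_map_eq hXmeas hXdist S.measurableSet hνS)
  have hcongr : ∀ {s t : Set Ω}, (∀ ω, (∀ k, W0 ω + ∑ j ∈ Finset.range k, X j ω ∈ Z) →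
      (∀ k, lam + ∑ j ∈ Finset.range k, X j ω ∈ Z) →
      (∀ k, Lam + ∑ j ∈ Finset.range k, X j ω ∈ Z) → (ω ∈ s ↔ ω ∈ t)) → P s = P t :=
    fun h => measure_congr <| hZae.mono fun ω hω => propext <|
      h ω (hω _ (by simp)) (hω _ (by simp)) (hω _ (by simp))
  convert measure_step_inter_div_eq (lam := lam) (n := n) (i := i) hXmeas hW0meas hXindep hXdist
    hW0indep (hZ.mono inter_subset_right).measurableSet ⟨hLam, hRZ (by simp)⟩ ?_ using 2
  · exact hcongr fun ω hW0Z _ _ => by simp [hW0Z]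
  · exact hcongr fun ω hW0Z _ _ => by simp [hW0Z]
  · exact congrArg _ (hcongr fun ω _ _ hLamZ => by simp [staysIn, hLamZ])
  · exact hcongr fun ω _ hlamZ _ => by simp [staysIn, hlamZ]
  · exact hpos.trans_eq (hcongr fun ω hW0Z _ _ => by simp [hW0Z])

/-- finite-horizon conditioning. For `λ, Λ ∈ C̄` with `Λ - λ ∈ S`, `n ≥ 2`,
`0 ≤ i ≤ n-2`, and a positive-probability conditioning event,
`ℙ(W(i+1) = Λ | W(i) = λ, W(k) ∈ C̄ for 0 ≤ k ≤ n) = ν({Λ-λ})·ψ_{n-i-1}(Λ)/ψ_{n-i}(λ)`,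
where `ψ_m(μ) = ℙ(μ + S(k) ∈ C̄ for all 1 ≤ k ≤ m)` (so `ψ_0 = 1`); in particular the
conditional transition probability depends on `n` and `i` only through `n - i`. -/
theorem stmt_5
    (D : ℕ) (hD : 1 ≤ D)
    (S : Finset (Fin D → ℝ)) (hSne : S.Nonempty)
    (ν : Measure (Fin D → ℝ)) [IsProbabilityMeasure ν]
    (hνpos : ∀ s ∈ S, 0 < ν {s}) (hνS : ν (S : Set (Fin D → ℝ)) = 1)
    {Ω : Type*} [MeasurableSpace Ω] (P : Measure Ω) [IsProbabilityMeasure P]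
    (X : ℕ → Ω → (Fin D → ℝ)) (hXmeas : ∀ k, Measurable (X k))
    (hXindep : iIndepFun X P)
    (hXdist : ∀ k, Measure.map (X k) P = ν)
    (C : Set (Fin D → ℝ)) (hCadd : ∀ x ∈ C, ∀ y ∈ C, x + y ∈ C)
    (W0 : Ω → (Fin D → ℝ)) (hW0meas : Measurable W0)
    (hW0count : (Set.range W0).Countable)
    (hW0indep : IndepFun W0 (fun ω k => X k ω) P)
    (lam Lam : Fin D → ℝ) (hlam : lam ∈ C) (hLam : Lam ∈ C) (hstep : Lam - lam ∈ S)
    (n i : ℕ) (hn : 2 ≤ n) (hi : i ≤ n - 2)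
    (hpos : 0 < P ({ω | W0 ω + (∑ k ∈ Finset.range i, X k ω) = lam}
        ∩ {ω | ∀ k, k ≤ n → W0 ω + (∑ j ∈ Finset.range k, X j ω) ∈ C})) :
    P ({ω | W0 ω + (∑ k ∈ Finset.range (i + 1), X k ω) = Lam}
        ∩ ({ω | W0 ω + (∑ k ∈ Finset.range i, X k ω) = lam}
          ∩ {ω | ∀ k, k ≤ n → W0 ω + (∑ j ∈ Finset.range k, X j ω) ∈ C}))
      / P ({ω | W0 ω + (∑ k ∈ Finset.range i, X k ω) = lam}
          ∩ {ω | ∀ k, k ≤ n → W0 ω + (∑ j ∈ Finset.range k, X j ω) ∈ C})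
    = ν {Lam - lam}
        * P {ω | ∀ k, 1 ≤ k → k ≤ n - i - 1 →
              Lam + (∑ j ∈ Finset.range k, X j ω) ∈ C}
        / P {ω | ∀ k, 1 ≤ k → k ≤ n - i →
              lam + (∑ j ∈ Finset.range k, X j ω) ∈ C} :=
  stmt_5_general D S ν hνS P X hXmeas hXindep hXdist C W0 hW0meas hW0count hW0indep lam Lam hLam n i
    hpos
end

section
/- Let Λ₀ ⊆ C̄ be a countable set of states such that λ ∈ Λ₀, s ∈ S and λ + s ∈ C̄ imply λ + s ∈ Λ₀, and fix λ₀ ∈ Λ₀. Assume there exist positive reals κ₁, κ₂ and a function V : Λ₀ → ℝ_{>0} such that for every λ ∈ Λ₀, ψ_n(λ) · n^{κ₂} → κ₁ V(λ) as n → ∞. Then: (a) for every λ ∈ Λ₀ the sequence h_n(λ) = ψ_n(λ)/ψ_n(λ₀) converges to h(λ) := V(λ)/V(λ₀); and (b) the limit h is harmonic for the kernel killed outside C̄, i.e. for every λ ∈ Λ₀, h(λ) = ∑_{s ∈ S, λ+s ∈ C̄} ν({s}) · h(λ + s). -/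
/-!
Conditioning on the first step gives `ψ_{n+1}(λ) = ∑_{s ∈ S} ν{s} 1_C(λ + s) ψ_n(λ + s)`,
i.e. `ψ_n = Qⁿ 1` for the kernel `Q = killedOperator ν S C` killed outside `C`. Since `C` is an
arbitrary set, the survival events are measurable only after discarding the null event on which
some step leaves `S`. Multiplying the recursion by `n ^ κ₂` and letting `n → ∞`, using
`(n / (n + 1)) ^ κ₂ → 1`, the asymptotics `ψ_n(λ) n ^ κ₂ → κ₁ V(λ)` turn it into
`κ₁ V = Q (κ₁ V)` on `Λ₀`; dividing by `κ₁ V(λ₀)` gives (b), and (a) is the quotient of the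
asymptotics at `λ` and `λ₀`.
-/

open MeasureTheory ProbabilityTheory Filter Topology

lemma tendsto_succ_mul_rpow {f : ℕ → ℝ} {κ L : ℝ}
    (hf : Tendsto (fun n : ℕ => f n * (n : ℝ) ^ κ) atTop (𝓝 L)) :
    Tendsto (fun n : ℕ => f (n + 1) * (n : ℝ) ^ κ) atTop (𝓝 L) := by
  have hratio : Tendsto (fun n : ℕ => ((n : ℝ) / (n + 1)) ^ κ) atTop (𝓝 1) := by
    have h := (Real.continuousAt_rpow_const 1 κ (Or.inl one_ne_zero)).tendsto.comp
      (tendsto_natCast_div_add_atTop (1 : ℝ))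
    rwa [Real.one_rpow] at h
  have hshift := (hf.comp (tendsto_add_atTop_nat 1)).mul hratio
  rw [mul_one] at hshift
  refine hshift.congr fun n => ?_
  have hn : (0 : ℝ) < n + 1 := by positivity
  simp only [Function.comp_apply, Nat.cast_add, Nat.cast_one]
  rw [Real.div_rpow n.cast_nonneg hn.le]
  field_simp

lemma tendsto_div_of_tendsto_mul_rpow {f g : ℕ → ℝ} {κ a b : ℝ}
    (hf : Tendsto (fun n : ℕ => f n * (n : ℝ) ^ κ) atTop (𝓝 a))
    (hg : Tendsto (fun n : ℕ => g n * (n : ℝ) ^ κ) atTop (𝓝 b)) (hb : b ≠ 0) :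
    Tendsto (fun n => f n / g n) atTop (𝓝 (a / b)) := by
  refine (hf.div hg hb).congr' ?_
  filter_upwards [eventually_ge_atTop 1] with n hn
  exact mul_div_mul_right _ _ (Real.rpow_pos_of_pos (by exact_mod_cast hn) κ).ne'

section RandomWalk

variable {E : Type*}

def stepsIn (S : Set E) (n : ℕ) : Set (ℕ → E) :=
  {x | ∀ j < n, x j ∈ S}

@[simp]
lemma stepsIn_zero (S : Set E) : stepsIn S 0 = Set.univ := by
  simp [stepsIn]

lemma mem_stepsIn_succ {S : Set E} {n : ℕ} {x : ℕ → E} :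
    x ∈ stepsIn S (n + 1) ↔ x 0 ∈ S ∧ (fun j => x (j + 1)) ∈ stepsIn S n := by
  simp only [stepsIn, Set.mem_ofPred_eq]
  exact ⟨fun h => ⟨h 0 (by omega), fun j hj => h (j + 1) (by omega)⟩,
    fun ⟨h0, h⟩ j hj => by rcases j with _ | j; exacts [h0, h j (by omega)]⟩

lemma measure_preimage_inter_stepsIn {Ω : Type*} [MeasurableSpace Ω] {P : Measure Ω}
    {Y : ℕ → Ω → E} {S : Set E} (hsteps : ∀ᵐ ω ∂P, ∀ j, Y j ω ∈ S) (A : Set (ℕ → E)) (n : ℕ) :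
    P ((fun ω j => Y j ω) ⁻¹' (A ∩ stepsIn S n)) = P ((fun ω j => Y j ω) ⁻¹' A) := by
  rw [Set.preimage_inter]
  exact measure_inter_conull (mem_ae_iff.1 (hsteps.mono fun ω h j _ => h j))

theorem ProbabilityTheory.iIndepFun.indepFun_head_tail [MeasurableSpace E] {Ω : Type*}
    [MeasurableSpace Ω] {P : Measure Ω} {Y : ℕ → Ω → E} (hY : ∀ k, Measurable (Y k))
    (h : iIndepFun Y P) :
    IndepFun (Y 0) (fun ω j => Y (j + 1) ω) P := by
  have hdisj : Disjoint ({0} : Set ℕ) (Set.Ici 1) := by simp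
  have hind := indep_iSup_of_disjoint (fun k => (hY k).comap_le) h.iIndep hdisj
  have htail : MeasurableSpace.pi.comap (fun ω j => Y (j + 1) ω) ≤
      ⨆ k ∈ Set.Ici 1, MeasurableSpace.comap (Y k) ‹_› := by
    simp only [MeasurableSpace.pi, MeasurableSpace.comap_iSup, MeasurableSpace.comap_comp]
    exact iSup_le fun j => le_iSup₂
      (f := fun k (_ : k ∈ Set.Ici 1) => MeasurableSpace.comap (Y k) ‹_›) (j + 1) (by simp)
  rw [IndepFun_iff_Indep]
  exact indep_of_indep_of_le_right (indep_of_indep_of_le_left hind (by simp)) htail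

lemma measurableSet_singleton_inter [MeasurableSpace E] [MeasurableSingletonClass E] (s : E)
    (T : Set E) : MeasurableSet ({s} ∩ T) :=
  (Set.subsingleton_singleton.anti Set.inter_subset_left).measurableSet

variable [AddCommMonoid E] {C : Set E}

def survivalSet (C : Set E) (lam : E) (n : ℕ) : Set (ℕ → E) :=
  {x | ∀ k, 1 ≤ k → k ≤ n → lam + ∑ j ∈ Finset.range k, x j ∈ C}

@[simp]
lemma survivalSet_zero (lam : E) : survivalSet C lam 0 = Set.univ :=
  Set.eq_univ_of_forall fun _ k hk hk0 => absurd (hk.trans hk0) (by omega)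

lemma mem_survivalSet_succ {lam : E} {n : ℕ} {x : ℕ → E} :
    x ∈ survivalSet C lam (n + 1) ↔
      lam + x 0 ∈ C ∧ (fun j => x (j + 1)) ∈ survivalSet C (lam + x 0) n := by
  have hsum : ∀ k, lam + ∑ j ∈ Finset.range (k + 1), x j
      = lam + x 0 + ∑ j ∈ Finset.range k, x (j + 1) := fun k => by
    rw [Finset.sum_range_succ', add_assoc, add_comm (∑ j ∈ _, _)]
  constructor
  · intro hx
    refine ⟨by simpa using hx 1 le_rfl (by omega), fun k hk hkn => ?_⟩
    simpa only [hsum] using hx (k + 1) (by omega) (by omega)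
  · rintro ⟨h0, hx⟩ k hk hkn
    obtain ⟨k, rfl⟩ := Nat.exists_eq_add_of_le' hk
    rw [hsum]
    rcases Nat.eq_zero_or_pos k with rfl | hk0
    · simpa using h0
    · exact hx k hk0 (by omega)

lemma survivalSet_inter_stepsIn_succ (S : Finset E) (lam : E) (n : ℕ) :
    survivalSet C lam (n + 1) ∩ stepsIn S (n + 1) =
      ⋃ s ∈ S, (fun x : ℕ → E => x 0) ⁻¹' ({s} ∩ {a | lam + a ∈ C}) ∩
        (fun x j => x (j + 1)) ⁻¹' (survivalSet C (lam + s) n ∩ stepsIn S n) := by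
  ext x
  simp only [Set.mem_inter_iff, mem_survivalSet_succ, mem_stepsIn_succ, Set.mem_iUnion,
    Set.mem_preimage, Set.mem_singleton_iff, Set.mem_ofPred_eq, Finset.mem_coe, exists_prop]
  constructor
  · rintro ⟨⟨hC, hx⟩, hS, hxS⟩
    exact ⟨x 0, hS, ⟨rfl, hC⟩, hx, hxS⟩
  · rintro ⟨s, hs, ⟨rfl, hC⟩, hx, hxS⟩
    exact ⟨⟨hC, hx⟩, hs, hxS⟩

variable [MeasurableSpace E]

noncomputable def killedOperator (ν : Measure E) (S : Finset E) (C : Set E) (f : E → ℝ)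
    (lam : E) : ℝ :=
  ∑ s ∈ S, (ν {s}).toReal * C.indicator f (lam + s)

lemma killedOperator_div_const (ν : Measure E) (S : Finset E) (C : Set E) (f : E → ℝ) (c : ℝ)
    (lam : E) :
    killedOperator ν S C (fun μ => f μ / c) lam = killedOperator ν S C f lam / c := by
  simp only [killedOperator, Finset.sum_div, mul_div_assoc]
  refine Finset.sum_congr rfl fun s _ => ?_
  by_cases hC : lam + s ∈ C <;> simp [hC]

lemma killedOperator_eq_of_tendsto_mul_rpow {ν : Measure E} {S : Finset E} {C : Set E}
    {ψ : ℕ → E → ℝ} (hψ : ∀ n lam, ψ (n + 1) lam = killedOperator ν S C (ψ n) lam)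
    {Λ₀ : Set E} (hΛ₀ : ∀ lam ∈ Λ₀, ∀ s ∈ S, lam + s ∈ C → lam + s ∈ Λ₀) {κ : ℝ} {g : E → ℝ}
    (hlim : ∀ lam ∈ Λ₀, Tendsto (fun n : ℕ => ψ n lam * (n : ℝ) ^ κ) atTop (𝓝 (g lam)))
    {lam : E} (hlam : lam ∈ Λ₀) :
    g lam = killedOperator ν S C g lam := by
  refine tendsto_nhds_unique (tendsto_succ_mul_rpow (hlim lam hlam)) ?_
  simp only [hψ, killedOperator, Finset.sum_mul]
  refine tendsto_finsetSum _ fun s hs => ?_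
  by_cases hC : lam + s ∈ C
  · simpa [hC, mul_assoc] using (hlim _ (hΛ₀ lam hlam s hs hC)).const_mul _
  · simp [hC]

variable [MeasurableSingletonClass E]

lemma measurableSet_survivalSet_inter_stepsIn (S : Finset E) (lam : E) (n : ℕ) :
    MeasurableSet (survivalSet C lam n ∩ stepsIn S n) := by
  induction n generalizing lam with
  | zero => simp
  | succ n ih =>
    rw [survivalSet_inter_stepsIn_succ]
    refine .biUnion S.countable_toSet fun s _ => .inter ?_ ((ih (lam + s)).preimage ?_)
    · exact (measurableSet_singleton_inter s _).preimage (measurable_pi_apply 0)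
    · exact measurable_pi_lambda _ fun j => measurable_pi_apply (j + 1)

variable {Ω : Type*} [MeasurableSpace Ω] {P : Measure Ω} {Y : ℕ → Ω → E} {ν : Measure E}
  {S : Finset E}

lemma measure_survivalSet_succ (hY : ∀ k, Measurable (Y k)) (h : iIndepFun Y P)
    (hlaw : ∀ k, P.map (Y k) = ν) (hsteps : ∀ᵐ ω ∂P, ∀ j, Y j ω ∈ S) (lam : E) (n : ℕ) :
    P ((fun ω j => Y j ω) ⁻¹' survivalSet C lam (n + 1)) =
      ∑ s ∈ S, ν {s} * C.indicator
        (fun μ => P ((fun ω j => Y (j + 1) ω) ⁻¹' survivalSet C μ n)) (lam + s) := by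
  have hA := fun s : E => measurableSet_singleton_inter s {a | lam + a ∈ C}
  rw [← measure_preimage_inter_stepsIn hsteps, survivalSet_inter_stepsIn_succ,
    Set.preimage_iUnion₂, measure_biUnion_finset]
  · refine Finset.sum_congr rfl fun s _ => ?_
    have hpiece : P ((Y 0) ⁻¹' ({s} ∩ {a | lam + a ∈ C}) ∩
        (fun ω j => Y (j + 1) ω) ⁻¹' (survivalSet C (lam + s) n ∩ stepsIn S n)) =
        ν ({s} ∩ {a | lam + a ∈ C}) *
          P ((fun ω j => Y (j + 1) ω) ⁻¹' survivalSet C (lam + s) n) := by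
      rw [(h.indepFun_head_tail hY).meas_inter ⟨_, hA s, rfl⟩
        ⟨_, measurableSet_survivalSet_inter_stepsIn S (lam + s) n, rfl⟩,
        measure_preimage_inter_stepsIn (hsteps.mono fun ω h j => h (j + 1)),
        ← hlaw 0, Measure.map_apply (hY 0) (hA s)]
    refine hpiece.trans ?_
    by_cases hC : lam + s ∈ C <;> simp [hC]
  · intro s _ t _ hst
    exact ((((Set.disjoint_singleton.2 hst).mono Set.inter_subset_left
      Set.inter_subset_left).preimage _).mono Set.inter_subset_left
      Set.inter_subset_left).preimage _
  · intro s _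
    have htail : Measurable fun x : ℕ → E => fun j => x (j + 1) :=
      measurable_pi_lambda _ fun j => measurable_pi_apply (j + 1)
    exact (measurable_pi_lambda _ hY) (((measurable_pi_apply 0) (hA s)).inter
      (htail (measurableSet_survivalSet_inter_stepsIn S (lam + s) n)))

theorem toReal_measure_survivalSet_eq_iterate [IsProbabilityMeasure P] [IsFiniteMeasure ν]
    (hY : ∀ k, Measurable (Y k)) (h : iIndepFun Y P) (hlaw : ∀ k, P.map (Y k) = ν)
    (hsteps : ∀ᵐ ω ∂P, ∀ j, Y j ω ∈ S) (n : ℕ) (lam : E) :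
    (P ((fun ω j => Y j ω) ⁻¹' survivalSet C lam n)).toReal =
      (killedOperator ν S C)^[n] 1 lam := by
  induction n generalizing Y lam with
  | zero => simp
  | succ n ih =>
    have ih_tail := ih (fun k => hY (k + 1)) (h.precomp Nat.succ_injective)
      (fun k => hlaw (k + 1)) (hsteps.mono fun ω h j => h (j + 1))
    rw [measure_survivalSet_succ hY h hlaw hsteps, Function.iterate_succ_apply',
      killedOperator, ENNReal.toReal_sum]
    · refine Finset.sum_congr rfl fun s _ => ?_
      by_cases hC : lam + s ∈ C <;> simp [hC, ih_tail]
    · intro s _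
      refine ENNReal.mul_ne_top (measure_ne_top _ _) ?_
      by_cases hC : lam + s ∈ C <;> simp [hC, measure_ne_top]

end RandomWalk

theorem stmt_8_general
    (D : ℕ)
    (S : Finset (Fin D → ℝ))
    (ν : Measure (Fin D → ℝ)) [IsProbabilityMeasure ν]
    (hνS : ν (S : Set (Fin D → ℝ)) = 1)
    {Ω : Type*} [MeasurableSpace Ω] (P : Measure Ω) [IsProbabilityMeasure P]
    (X : ℕ → Ω → (Fin D → ℝ)) (hXmeas : ∀ k, Measurable (X k))
    (hXindep : iIndepFun X P)
    (hXdist : ∀ k, Measure.map (X k) P = ν)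
    (C : Set (Fin D → ℝ))
    (Λ₀ : Set (Fin D → ℝ))
    (hΛ₀closed : ∀ lam ∈ Λ₀, ∀ s ∈ S, lam + s ∈ C → lam + s ∈ Λ₀)
    (lam₀ : Fin D → ℝ) (hlam₀ : lam₀ ∈ Λ₀)
    (κ₁ κ₂ : ℝ) (hκ₁ : 0 < κ₁)
    (V : (Fin D → ℝ) → ℝ) (hV : ∀ lam ∈ Λ₀, 0 < V lam)
    (hasymp : ∀ lam ∈ Λ₀, Tendsto (fun n : ℕ =>
        (P {ω | ∀ k, 1 ≤ k → k ≤ n →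
            lam + (∑ j ∈ Finset.range k, X j ω) ∈ C}).toReal * (n : ℝ) ^ κ₂)
        atTop (nhds (κ₁ * V lam))) :
    (∀ lam ∈ Λ₀, Tendsto (fun n : ℕ =>
        (P {ω | ∀ k, 1 ≤ k → k ≤ n →
            lam + (∑ j ∈ Finset.range k, X j ω) ∈ C}).toReal
          / (P {ω | ∀ k, 1 ≤ k → k ≤ n →
              lam₀ + (∑ j ∈ Finset.range k, X j ω) ∈ C}).toReal)
        atTop (nhds (V lam / V lam₀)))
    ∧ ∀ lam ∈ Λ₀, V lam / V lam₀
        = ∑ s ∈ S, (ν {s}).toReal * C.indicator (fun μ => V μ / V lam₀) (lam + s) := by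
  have hc : κ₁ * V lam₀ ≠ 0 := (mul_pos hκ₁ (hV lam₀ hlam₀)).ne'
  have hratio : ∀ lam, V lam / V lam₀ = κ₁ * V lam / (κ₁ * V lam₀) := fun lam =>
    (mul_div_mul_left _ _ hκ₁.ne').symm
  refine ⟨fun lam hlam => hratio lam ▸
    tendsto_div_of_tendsto_mul_rpow (hasymp lam hlam) (hasymp lam₀ hlam₀) hc, ?_⟩
  have hsteps : ∀ᵐ ω ∂P, ∀ j, X j ω ∈ S := ae_all_iff.2 fun j =>
    ae_of_ae_map (hXmeas j).aemeasurable <| hXdist j ▸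
      (ae_mem_iff_measure_eq S.measurableSet.nullMeasurableSet).2 (by rw [hνS, measure_univ])
  have hψ := toReal_measure_survivalSet_eq_iterate (C := C) hXmeas hXindep hXdist hsteps
  intro lam hlam
  have hharm := killedOperator_eq_of_tendsto_mul_rpow (ν := ν) (S := S) (C := C)
    (ψ := fun n lam => (P ((fun ω j => X j ω) ⁻¹' survivalSet C lam n)).toReal)
    (fun n lam => by simp only [hψ, Function.iterate_succ_apply']) hΛ₀closed hasymp hlam
  calc V lam / V lam₀ = κ₁ * V lam / (κ₁ * V lam₀) := hratio lam
    _ = killedOperator ν S C (fun μ => κ₁ * V μ) lam / (κ₁ * V lam₀) := by rw [hharm]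
    _ = killedOperator ν S C (fun μ => V μ / V lam₀) lam := by
      simp only [← killedOperator_div_const, ← hratio]

/-- if `ψ_n(λ)·n^{κ₂} → κ₁ V(λ)` for all `λ` in a countable set of states
`Λ₀ ⊆ C̄` closed under the admissible steps, then (a) `h_n(λ) = ψ_n(λ)/ψ_n(λ₀)` converges
to `h(λ) = V(λ)/V(λ₀)`, and (b) the limit `h` is harmonic for the kernel killed
outside `C̄`. Here `ψ_n(λ) = ℙ(λ + S(k) ∈ C̄ for 1 ≤ k ≤ n)`. -/
theorem stmt_8
    (D : ℕ) (hD : 1 ≤ D)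
    (S : Finset (Fin D → ℝ)) (hSne : S.Nonempty)
    (ν : Measure (Fin D → ℝ)) [IsProbabilityMeasure ν]
    (hνpos : ∀ s ∈ S, 0 < ν {s}) (hνS : ν (S : Set (Fin D → ℝ)) = 1)
    {Ω : Type*} [MeasurableSpace Ω] (P : Measure Ω) [IsProbabilityMeasure P]
    (X : ℕ → Ω → (Fin D → ℝ)) (hXmeas : ∀ k, Measurable (X k))
    (hXindep : iIndepFun X P)
    (hXdist : ∀ k, Measure.map (X k) P = ν)
    (C : Set (Fin D → ℝ)) (hCadd : ∀ x ∈ C, ∀ y ∈ C, x + y ∈ C)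
    (Λ₀ : Set (Fin D → ℝ)) (hΛ₀sub : Λ₀ ⊆ C) (hΛ₀count : Λ₀.Countable)
    (hΛ₀closed : ∀ lam ∈ Λ₀, ∀ s ∈ S, lam + s ∈ C → lam + s ∈ Λ₀)
    (lam₀ : Fin D → ℝ) (hlam₀ : lam₀ ∈ Λ₀)
    (κ₁ κ₂ : ℝ) (hκ₁ : 0 < κ₁) (hκ₂ : 0 < κ₂)
    (V : (Fin D → ℝ) → ℝ) (hV : ∀ lam ∈ Λ₀, 0 < V lam)
    (hasymp : ∀ lam ∈ Λ₀, Tendsto (fun n : ℕ =>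
        (P {ω | ∀ k, 1 ≤ k → k ≤ n →
            lam + (∑ j ∈ Finset.range k, X j ω) ∈ C}).toReal * (n : ℝ) ^ κ₂)
        atTop (nhds (κ₁ * V lam))) :
    (∀ lam ∈ Λ₀, Tendsto (fun n : ℕ =>
        (P {ω | ∀ k, 1 ≤ k → k ≤ n →
            lam + (∑ j ∈ Finset.range k, X j ω) ∈ C}).toReal
          / (P {ω | ∀ k, 1 ≤ k → k ≤ n →
              lam₀ + (∑ j ∈ Finset.range k, X j ω) ∈ C}).toReal)
        atTop (nhds (V lam / V lam₀)))
    ∧ ∀ lam ∈ Λ₀, V lam / V lam₀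
        = ∑ s ∈ S, (ν {s}).toReal * C.indicator (fun μ => V μ / V lam₀) (lam + s) :=
  stmt_8_general D S ν hνS P X hXmeas hXindep hXdist C Λ₀ hΛ₀closed lam₀ hlam₀ κ₁ κ₂ hκ₁ V hV hasymp
end

section
/- (Discrete harmonicity of the type C Weyl dimension polynomial.) Fix d ≥ 1 and define the polynomial function H : ℝ^d → ℝ by H(x) = ∏_{i=1}^d x_i · ∏_{1≤i<j≤d} (x_i² − x_j²). Then for every x ∈ ℝ^d, ∑_{i=1}^d ( H(x + e_i) + H(x − e_i) ) = 2d · H(x). Consequently, since H vanishes whenever some coordinate is 0 or two coordinates are equal in absolute value, the kernel p⁺(λ, Λ) = (1/(2d)) H(Λ + ρ)/H(λ + ρ), with ρ = (d, d−1, …, 1) and Λ ranging over the dominant weights Λ ∈ ℤ^d with Λ₁ ≥ ⋯ ≥ Λ_d ≥ 0 and Λ − λ ∈ {±e_1,…,±e_d}, is a stochastic matrix on the dominant weights of ℤ^d. -/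
/-- The type-`C` Weyl polynomial `H(x) = ∏_i x_i · ∏_{i<j} (x_i² - x_j²)`. -/
noncomputable def HC (d : ℕ) (x : Fin d → ℝ) : ℝ :=
  (∏ i, x i) * ∏ i, ∏ j ∈ Finset.Ioi i, ((x i) ^ 2 - (x j) ^ 2)

/-- A weight `λ ∈ ℤ^d` is dominant if `λ₁ ≥ ⋯ ≥ λ_d ≥ 0`. -/
def DomC (d : ℕ) (μ : Fin d → ℤ) : Prop :=
  (∀ i j : Fin d, i ≤ j → μ j ≤ μ i) ∧ ∀ i, 0 ≤ μ i

open Classical in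
/-- The conditioned kernel `p⁺(λ,Λ) = (1/(2d))·H(Λ+ρ)/H(λ+ρ)` with `ρ = (d,d-1,…,1)`,
for `Λ` dominant with `Λ - λ ∈ {±e_1,…,±e_d}`, and `0` otherwise. -/
noncomputable def pPlusC (d : ℕ) (lam Lam : Fin d → ℤ) : ℝ :=
  if DomC d Lam ∧ (∃ i, Lam = lam + Pi.single i 1 ∨ Lam = lam - Pi.single i 1) then
    (1 / (2 * (d : ℝ)))
      * HC d (fun i => ((Lam i + ((d : ℤ) - ((i : ℕ) : ℤ)) : ℤ) : ℝ))
      / HC d (fun i => ((lam i + ((d : ℤ) - ((i : ℕ) : ℤ)) : ℤ) : ℝ))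
  else 0

/-!
Up to a sign, `HC d x = det (x_j ^ (2i+1))_{i,j}`. Shifting `x_j` by `±1` changes only
column `j`, and `(t+1)^(2i+1) + (t-1)^(2i+1) = ∑_s C_{is} t^(2s+1)` with `C` lower triangular
with diagonal `2`. By multilinearity of the determinant, the discrete Laplacian of `det A` is
`∑_j det (A with column j replaced by column j of C A) = tr C · det A = 2d · det A`.

A weight `μ` is dominant iff `μ + ρ` is strictly decreasing and positive, where `HC > 0`.
For dominant `λ`, the vector `λ ± e_i + ρ` is still weakly decreasing and nonnegative, so if
`λ ± e_i` is not dominant it has two equal coordinates or a zero one, where `HC` vanishes. Hence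
the row sum of `p⁺` at `λ` is the discrete Laplacian of `HC` at `λ + ρ` divided by
`2d · HC (λ + ρ)`, that is `1`.
-/

open Finset Matrix

theorem Finset.sum_range_two_mul {M : Type*} [AddCommMonoid M] (f : ℕ → M) (n : ℕ) :
    ∑ m ∈ range (2 * n), f m = ∑ s ∈ range n, (f (2 * s) + f (2 * s + 1)) := by
  induction n with
  | zero => simp
  | succ n ih =>
    rw [mul_add, mul_one, sum_range_succ, sum_range_succ, sum_range_succ, ih, add_assoc]

theorem add_one_pow_add_sub_one_pow_two_mul_add_one {R : Type*} [CommRing R] (t : R) {r d : ℕ}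
    (hrd : r < d) :
    (t + 1) ^ (2 * r + 1) + (t - 1) ^ (2 * r + 1)
      = ∑ s ∈ range d, 2 * ((2 * r + 1).choose (2 * s + 1) : R) * t ^ (2 * s + 1) := by
  set n := 2 * r + 1
  set F : ℕ → R := fun m => (n.choose m : R) * (1 - (-1) ^ m) * t ^ m
  have hodd : (t - 1) ^ n = -(1 - t) ^ n := by rw [← neg_sub, Odd.neg_pow ⟨r, rfl⟩]
  have expand : (t + 1) ^ n - (1 - t) ^ n = ∑ m ∈ range (n + 1), F m := by
    rw [add_pow, sub_eq_add_neg 1 t, add_comm 1 (-t), add_pow, ← sum_sub_distrib]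
    refine sum_congr rfl fun m _ => ?_
    rw [neg_pow]
    ring
  have extend : ∑ m ∈ range (n + 1), F m = ∑ m ∈ range (2 * d), F m :=
    sum_subset (range_subset_range.mpr (by omega)) fun m _ hm => by
      rw [mem_range, not_lt] at hm
      simp only [F, Nat.choose_eq_zero_of_lt (by omega : n < m), Nat.cast_zero, zero_mul]
  rw [hodd, ← sub_eq_add_neg, expand, extend, sum_range_two_mul]
  refine sum_congr rfl fun s _ => ?_
  simp only [F, pow_succ, pow_mul]
  ring

theorem Matrix.sum_det_updateCol_mul {n R : Type*} [Fintype n] [DecidableEq n] [CommRing R]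
    (A C : Matrix n n R) :
    ∑ i, (A.updateCol i fun r => (C * A) r i).det = C.trace * A.det := by
  have hcramer : ∀ i, (A.updateCol i fun r => (C * A) r i).det = (A.adjugate * (C * A)) i i :=
    fun i => by rw [← cramer_apply, cramer_eq_adjugate_mulVec]; rfl
  simp only [hcramer]
  change (A.adjugate * (C * A)).trace = _
  rw [trace_mul_comm, mul_assoc, mul_adjugate, Matrix.mul_smul, mul_one, trace_smul, smul_eq_mul,
    mul_comm]

theorem Matrix.of_apply_add_single {ι R : Type*} [DecidableEq ι] [AddCommMonoid R]
    (φ : ι → R → R) (x : ι → R) (j : ι) (c : R) :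
    (of fun i k => φ i ((x + Pi.single j c : ι → R) k))
      = (of fun i k => φ i (x k)).updateCol j fun i => φ i (x j + c) := by
  ext i k
  rcases eq_or_ne k j with rfl | hkj <;> simp [*]

theorem Matrix.sum_det_of_add_single_add_det_of_sub_single {ι R : Type*} [Fintype ι]
    [DecidableEq ι] [CommRing R] (φ : ι → R → R) (C : Matrix ι ι R)
    (hφ : ∀ i t, φ i (t + 1) + φ i (t - 1) = ∑ s, C i s * φ s t) (x : ι → R) :
    ∑ j, ((of fun i k => φ i ((x + Pi.single j 1 : ι → R) k)).det
        + (of fun i k => φ i ((x - Pi.single j 1 : ι → R) k)).det)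
      = C.trace * (of fun i k => φ i (x k)).det := by
  rw [← sum_det_updateCol_mul]
  refine sum_congr rfl fun j _ => ?_
  rw [sub_eq_add_neg x, ← Pi.single_neg, of_apply_add_single, of_apply_add_single,
    ← det_updateCol_add]
  congr 2
  funext i
  simp [mul_apply, ← hφ, ← sub_eq_add_neg]

def oddBinomialMatrix (R : Type*) [Semiring R] (d : ℕ) : Matrix (Fin d) (Fin d) R :=
  of fun r s => 2 * ((2 * (r : ℕ) + 1).choose (2 * (s : ℕ) + 1) : R)

theorem trace_oddBinomialMatrix (R : Type*) [Semiring R] (d : ℕ) :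
    (oddBinomialMatrix R d).trace = 2 * d := by
  simp [trace, oddBinomialMatrix, Nat.cast_comm]

theorem add_one_pow_add_sub_one_pow_eq_sum_oddBinomialMatrix_mul {R : Type*} [CommRing R]
    {d : ℕ} (r : Fin d) (t : R) :
    (t + 1) ^ (2 * (r : ℕ) + 1) + (t - 1) ^ (2 * (r : ℕ) + 1)
      = ∑ s, oddBinomialMatrix R d r s * t ^ (2 * (s : ℕ) + 1) := by
  rw [add_one_pow_add_sub_one_pow_two_mul_add_one t r.isLt,
    ← Fin.sum_univ_eq_sum_range fun s => 2 * ((2 * (r : ℕ) + 1).choose (2 * s + 1) : R)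
      * t ^ (2 * s + 1)]
  rfl

theorem HC_eq_mul_det (d : ℕ) (x : Fin d → ℝ) :
    HC d x = (∏ i : Fin d, ∏ _j ∈ Ioi i, (-1 : ℝ))
      * (of fun i j : Fin d => x j ^ (2 * (i : ℕ) + 1)).det := by
  have hrow : (of fun i j : Fin d => x j ^ (2 * (i : ℕ) + 1))
      = of fun i j => x j * (vandermonde fun k => x k ^ 2)ᵀ i j := by
    ext i j
    simp only [of_apply, transpose_apply, vandermonde_apply]
    rw [pow_succ, pow_mul, mul_comm]
  rw [hrow, det_mul_row, det_transpose, det_vandermonde, HC, mul_left_comm]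
  congr 1
  rw [← prod_mul_distrib]
  refine prod_congr rfl fun i _ => ?_
  rw [← prod_mul_distrib]
  exact prod_congr rfl fun j _ => by ring

theorem sum_HC_add_single_add_HC_sub_single (d : ℕ) (x : Fin d → ℝ) :
    ∑ i, (HC d (x + Pi.single i 1) + HC d (x - Pi.single i 1)) = 2 * d * HC d x := by
  have hdet := sum_det_of_add_single_add_det_of_sub_single
    (fun (i : Fin d) (t : ℝ) => t ^ (2 * (i : ℕ) + 1)) (oddBinomialMatrix ℝ d)
    add_one_pow_add_sub_one_pow_eq_sum_oddBinomialMatrix_mul x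
  rw [trace_oddBinomialMatrix] at hdet
  simp only [HC_eq_mul_det, ← mul_add, ← mul_sum, hdet]
  ring

theorem HC_pos_of_strictAnti {d : ℕ} {x : Fin d → ℝ} (hx : StrictAnti x)
    (hpos : ∀ i, 0 < x i) : 0 < HC d x := by
  refine mul_pos (prod_pos fun i _ => hpos i) (prod_pos fun i _ => prod_pos fun j hj => ?_)
  have hji : x j < x i := hx (mem_Ioi.mp hj)
  nlinarith [hpos j]

theorem HC_eq_zero_of_apply_eq_zero {d : ℕ} {x : Fin d → ℝ} {i : Fin d} (h : x i = 0) :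
    HC d x = 0 :=
  mul_eq_zero_of_left (prod_eq_zero (mem_univ i) h) _

theorem HC_eq_zero_of_not_injective {d : ℕ} {x : Fin d → ℝ} (h : ¬ Function.Injective x) :
    HC d x = 0 := by
  obtain ⟨i, j, hij, hne⟩ := Function.not_injective_iff.mp h
  wlog hlt : i < j generalizing i j
  · exact this j i hij.symm hne.symm (lt_of_le_of_ne (not_lt.mp hlt) hne.symm)
  refine mul_eq_zero_of_right _ (prod_eq_zero (mem_univ i) (prod_eq_zero (mem_Ioi.mpr hlt) ?_))
  rw [hij, sub_self]

def rhoC (d : ℕ) : Fin d → ℤ := fun k => (d : ℤ) - ((k : ℕ) : ℤ)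

theorem domC_iff {d : ℕ} {μ : Fin d → ℤ} :
    DomC d μ ↔ StrictAnti (μ + rhoC d) ∧ ∀ k, 0 < (μ + rhoC d) k := by
  constructor
  · rintro ⟨hanti, hnonneg⟩
    refine ⟨fun a b hab => ?_, fun k => ?_⟩
    · have := hanti a b hab.le
      have : (a : ℕ) < b := hab
      simp only [Pi.add_apply, rhoC]
      omega
    · have := hnonneg k
      have := k.isLt
      simp only [Pi.add_apply, rhoC]
      omega
  · rintro ⟨hsa, hpos⟩
    rcases d with _ | n
    · exact ⟨fun a => a.elim0, fun a => a.elim0⟩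
    have hanti : Antitone μ := Fin.antitone_iff_succ_le.mpr fun i => by
      have := Fin.strictAnti_iff_succ_lt.mp hsa i
      simp only [Pi.add_apply, rhoC, Fin.val_succ, Fin.val_castSucc] at this
      omega
    refine ⟨fun a b hab => hanti hab, fun k => ?_⟩
    have hlast := hpos (Fin.last n)
    simp only [Pi.add_apply, rhoC, Fin.val_last] at hlast
    have := hanti (Fin.le_last k)
    omega

theorem HC_pos_of_domC {d : ℕ} {μ : Fin d → ℤ} (hμ : DomC d μ) :
    0 < HC d (Int.cast ∘ (μ + rhoC d)) := by
  obtain ⟨hsa, hpos⟩ := domC_iff.mp hμ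
  exact HC_pos_of_strictAnti (Int.cast_strictMono.comp_strictAnti hsa)
    fun k => Int.cast_pos.mpr (hpos k)

theorem antitone_add_single {ι : Type*} [PartialOrder ι] [DecidableEq ι] {y : ι → ℤ}
    (hy : StrictAnti y) (i : ι) {c : ℤ} (hc : |c| ≤ 1) : Antitone (y + Pi.single i c) := by
  intro a b hab
  rcases hab.eq_or_lt with rfl | hlt
  · rfl
  have := hy hlt
  rw [abs_le] at hc
  simp only [Pi.add_apply, Pi.single_apply]
  split_ifs <;> omega

theorem HC_eq_zero_or_strictAnti_add_single {d : ℕ} {y : Fin d → ℤ} (hy : StrictAnti y)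
    (hpos : ∀ k, 0 < y k) (i : Fin d) {c : ℤ} (hc : |c| ≤ 1) :
    HC d (Int.cast ∘ (y + Pi.single i c)) = 0
      ∨ StrictAnti (y + Pi.single i c) ∧ ∀ k, 0 < (y + Pi.single i c : Fin d → ℤ) k := by
  by_cases hinj : Function.Injective (Int.cast ∘ (y + Pi.single i c) : Fin d → ℝ)
  swap
  · exact .inl (HC_eq_zero_of_not_injective hinj)
  by_cases hzero : ∃ k, (y + Pi.single i c : Fin d → ℤ) k = 0
  · obtain ⟨k, hk⟩ := hzero
    exact .inl (HC_eq_zero_of_apply_eq_zero (i := k) (by simp [hk]))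
  push Not at hzero
  refine .inr ⟨(antitone_add_single hy i hc).strictAnti_of_injective hinj.of_comp, fun k => ?_⟩
  have hnonneg : 0 ≤ (y + Pi.single i c : Fin d → ℤ) k := by
    have := hpos k
    rw [abs_le] at hc
    simp only [Pi.add_apply, Pi.single_apply]
    split_ifs <;> omega
  exact hnonneg.lt_of_ne (hzero k).symm

theorem Int.cast_comp_add_single {ι R : Type*} [DecidableEq ι] [AddGroupWithOne R]
    (y : ι → ℤ) (i : ι) (c : ℤ) :
    (Int.cast ∘ (y + Pi.single i c) : ι → R) = Int.cast ∘ y + Pi.single i (c : R) := by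
  ext k
  rcases eq_or_ne k i with rfl | hki <;> simp [*]

theorem Pi.injOn_single {ι M : Type*} [DecidableEq ι] [Zero M] :
    Set.InjOn (fun p : ι × M => (Pi.single p.1 p.2 : ι → M)) {p | p.2 ≠ 0} := by
  rintro ⟨i, c⟩ hc ⟨j, c'⟩ - h
  have hi := congrFun h i
  obtain rfl : i = j := by
    by_contra hij
    simp_all
  simp_all

theorem pPlusC_add_single {d : ℕ} {lam : Fin d → ℤ} (hlam : DomC d lam) (i : Fin d) {c : ℤ}
    (hc : c = 1 ∨ c = -1) :
    pPlusC d lam (lam + Pi.single i c)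
      = 1 / (2 * d) * HC d (Int.cast ∘ (lam + rhoC d) + Pi.single i (c : ℝ))
        / HC d (Int.cast ∘ (lam + rhoC d)) := by
  have hshift : lam + Pi.single i c + rhoC d = lam + rhoC d + Pi.single i c :=
    add_right_comm ..
  have hnbr : ∃ j, lam + Pi.single i c = lam + Pi.single j 1
      ∨ lam + Pi.single i c = lam - Pi.single j 1 :=
    ⟨i, by rcases hc with rfl | rfl <;> simp [sub_eq_add_neg, Pi.single_neg]⟩
  have hcast : ∀ μ : Fin d → ℤ,
      (fun k => ((μ k + ((d : ℤ) - ((k : ℕ) : ℤ)) : ℤ) : ℝ))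
        = Int.cast ∘ (μ + rhoC d) := fun _ => rfl
  rw [pPlusC, hcast, hcast, hshift, Int.cast_comp_add_single]
  by_cases hdom : DomC d (lam + Pi.single i c)
  · exact if_pos ⟨hdom, hnbr⟩
  rw [if_neg fun h => hdom h.1]
  obtain ⟨hsa, hpos⟩ := domC_iff.mp hlam
  have hc' : |c| ≤ 1 := by rcases hc with rfl | rfl <;> simp
  rcases HC_eq_zero_or_strictAnti_add_single hsa hpos i hc' with hzero | hdom'
  · rw [← Int.cast_comp_add_single, hzero, mul_zero, zero_div]
  · exact absurd (domC_iff.mpr (hshift ▸ hdom')) hdom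

theorem pPlusC_nonneg {d : ℕ} {lam : Fin d → ℤ} (hlam : DomC d lam) (Lam : Fin d → ℤ) :
    0 ≤ pPlusC d lam Lam := by
  unfold pPlusC
  split_ifs with h
  · exact div_nonneg (mul_nonneg (by positivity) (HC_pos_of_domC h.1).le)
      (HC_pos_of_domC hlam).le
  · exact le_rfl

theorem tsum_pPlusC {d : ℕ} (hd : 1 ≤ d) {lam : Fin d → ℤ} (hlam : DomC d lam) :
    ∑' Lam, pPlusC d lam Lam = 1 := by
  set X : Fin d → ℝ := Int.cast ∘ (lam + rhoC d)
  set S : Finset (Fin d × ℤ) := univ ×ˢ {1, -1}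
  set nbr : Fin d × ℤ → Fin d → ℤ := fun p => lam + Pi.single p.1 p.2
  have hsupp : ∀ Lam ∉ S.image nbr, pPlusC d lam Lam = 0 := by
    intro Lam hLam
    refine if_neg fun ⟨_, j, hj⟩ => hLam (mem_image.mpr ?_)
    rcases hj with rfl | rfl
    · exact ⟨(j, 1), by simp [S], rfl⟩
    · exact ⟨(j, -1), by simp [S], by simp [nbr, sub_eq_add_neg, Pi.single_neg]⟩
  have hinj : Set.InjOn nbr S :=
    ((add_right_injective lam).comp_injOn Pi.injOn_single).mono fun p hp => by
      simp only [S, mem_coe, mem_product, mem_insert, mem_singleton] at hp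
      change p.2 ≠ 0
      omega
  have hpair : ∀ i, ∑ c ∈ {1, -1}, pPlusC d lam (nbr (i, c))
      = 1 / (2 * d) * HC d (X + Pi.single i 1) / HC d X
        + 1 / (2 * d) * HC d (X - Pi.single i 1) / HC d X := fun i => by
    rw [sum_pair (by norm_num), pPlusC_add_single hlam i (.inl rfl),
      pPlusC_add_single hlam i (.inr rfl)]
    simp [X, sub_eq_add_neg, Pi.single_neg]
  rw [tsum_eq_sum hsupp, sum_image hinj, sum_product, sum_congr rfl fun i _ => hpair i]
  have hX : 0 < HC d X := HC_pos_of_domC hlam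
  have hd' : (0 : ℝ) < d := by exact_mod_cast hd
  calc ∑ i, (1 / (2 * d) * HC d (X + Pi.single i 1) / HC d X
        + 1 / (2 * d) * HC d (X - Pi.single i 1) / HC d X)
      = (∑ i, (HC d (X + Pi.single i 1) + HC d (X - Pi.single i 1))) / (2 * d * HC d X) := by
        rw [sum_div]
        refine sum_congr rfl fun i _ => ?_
        field_simp
    _ = 1 := by rw [sum_HC_add_single_add_HC_sub_single, div_self (by positivity)]

/-- discrete harmonicity of the type `C` Weyl dimension polynomial:
`∑_i (H(x+e_i) + H(x-e_i)) = 2d·H(x)` for all `x ∈ ℝ^d`; consequently the kernel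
`p⁺` is a stochastic matrix on the dominant weights of `ℤ^d`. -/
theorem stmt_15 (d : ℕ) (hd : 1 ≤ d) :
    (∀ x : Fin d → ℝ,
        ∑ i : Fin d, (HC d (x + Pi.single i 1) + HC d (x - Pi.single i 1))
          = 2 * (d : ℝ) * HC d x)
    ∧ ∀ lam : Fin d → ℤ, DomC d lam →
        (∀ Lam, 0 ≤ pPlusC d lam Lam) ∧ (∑' Lam : Fin d → ℤ, pPlusC d lam Lam) = 1 :=
  ⟨sum_HC_add_single_add_HC_sub_single d,
    fun _ hlam => ⟨pPlusC_nonneg hlam, tsum_pPlusC hd hlam⟩⟩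
end

section
/- (Harmonicity for the spin kernel of the type B Weyl dimension polynomial.) Fix d ≥ 1 and define H : ℝ^d → ℝ by H(x) = ∏_{i=1}^d x_i · ∏_{1≤i<j≤d} (x_i² − x_j²). Then for every x ∈ ℝ^d, ∑_{ε ∈ {−1/2, +1/2}^d} H(x + ε) = 2^d · H(x), where the sum is over all 2^d vectors ε = (ε_1, …, ε_d) with each ε_i ∈ {−1/2, +1/2}. -/
open Finset Matrix

/-- single-variable key identity -/
lemma key_one (n : ℕ) (y : ℝ) :
    (y + 1/2) ^ (2*n+1) + (y - 1/2) ^ (2*n+1)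
      = ∑ k ∈ Finset.range (n+1),
          y ^ (2*k+1) * (((2*n+1).choose (2*k+1) : ℝ) * (1/2) ^ (2*n-2*k) * 2) := by
  have h1 := add_pow y (1/2 : ℝ) (2*n+1)
  have h2 := add_pow y (-(1/2) : ℝ) (2*n+1)
  rw [show y - 1/2 = y + -(1/2) by ring] at *
  rw [h1, h2, ← Finset.sum_add_distrib]
  have hzero : ∀ m ∈ Finset.range (2*n+1+1), ¬ Odd m →
      (y ^ m * (1/2:ℝ) ^ (2*n+1-m) * ((2*n+1).choose m : ℝ)
        + y ^ m * (-(1/2):ℝ) ^ (2*n+1-m) * ((2*n+1).choose m : ℝ)) = 0 := by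
    intro m hm hodd
    have he : Even m := Nat.not_odd_iff_even.mp hodd
    have hmle : m ≤ 2*n+1 := Nat.lt_succ_iff.mp (Finset.mem_range.mp hm)
    have : Odd (2*n+1-m) := by
      rcases he with ⟨t, ht⟩
      refine ⟨n - t, ?_⟩
      omega
    rw [Odd.neg_pow this]
    ring
  rw [← Finset.sum_filter_of_ne (p := fun m => Odd m) (by
    intro m hm h; by_contra hodd; exact h (hzero m hm hodd))]
  refine (Finset.sum_nbij' (fun k => 2*k+1) (fun m => m / 2) ?_ ?_ ?_ ?_ ?_).symm
  · intro k hk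
    simp only [Finset.mem_filter, Finset.mem_range] at *
    exact ⟨by omega, ⟨k, by ring⟩⟩
  · intro m hm
    simp only [Finset.mem_filter, Finset.mem_range] at *
    omega
  · intro k hk; show (2*k+1)/2 = k; omega
  · intro m hm
    simp only [Finset.mem_filter, Finset.mem_range] at hm
    rcases hm.2 with ⟨t, ht⟩
    show 2*(m/2)+1 = m
    omega
  · intro k hk
    have : (-(1/2):ℝ) ^ (2*n+1-(2*k+1)) = (1/2:ℝ) ^ (2*n+1-(2*k+1)) := by
      have he : Even (2*n+1-(2*k+1)) := by
        have : 2*n+1-(2*k+1) = 2*(n-k) := by omega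
        exact this ▸ even_two_mul _
      exact he.neg_pow _
    rw [this]
    have : 2*n+1-(2*k+1) = 2*n-2*k := by omega
    rw [this]
    ring

/-- Extended to a sum over `Fin d`. -/
lemma key_fin (d : ℕ) (y : ℝ) (j : Fin d) :
    (y + 1/2) ^ (2*(j:ℕ)+1) + (y - 1/2) ^ (2*(j:ℕ)+1)
      = ∑ k : Fin d, y ^ (2*(k:ℕ)+1) *
          (((2*(j:ℕ)+1).choose (2*(k:ℕ)+1) : ℝ) * (1/2) ^ (2*(j:ℕ)-2*(k:ℕ)) * 2) := by
  rw [key_one, Fin.sum_univ_eq_sum_range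
    (fun k => y ^ (2*k+1) * (((2*(j:ℕ)+1).choose (2*k+1) : ℝ) * (1/2) ^ (2*(j:ℕ)-2*k) * 2))]
  refine Finset.sum_subset ?_ ?_
  · exact Finset.range_subset_range.mpr j.2
  · intro k _ hk
    simp only [Finset.mem_range, not_lt] at hk
    have : (2*(j:ℕ)+1).choose (2*k+1) = 0 := Nat.choose_eq_zero_of_lt (by omega)
    simp [this]

/-- The triangular transition matrix. -/
noncomputable def Cmat (d : ℕ) : Matrix (Fin d) (Fin d) ℝ :=
  Matrix.of fun k j => ((2*(j:ℕ)+1).choose (2*(k:ℕ)+1) : ℝ) * (1/2) ^ (2*(j:ℕ)-2*(k:ℕ)) * 2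

lemma detC (d : ℕ) : (Cmat d).det = 2 ^ d := by
  rw [Matrix.det_of_upperTriangular]
  · have h2 : ∀ i : Fin d, Cmat d i i = 2 := fun i => by
      simp [Cmat, Nat.choose_self, Nat.sub_self]
    simp [h2, Finset.prod_const, Finset.card_univ]
  · intro i j hji
    simp only [id_eq] at hji
    have : (2*(j:ℕ)+1).choose (2*(i:ℕ)+1) = 0 :=
      Nat.choose_eq_zero_of_lt (by have := (Fin.lt_def).mp hji; omega)
    simp [Cmat, this]

lemma det_sum_eps (d : ℕ) (x : Fin d → ℝ) :
    ∑ ε : Fin d → Bool,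
        Matrix.det (Matrix.of fun i j : Fin d =>
          (x i + (if ε i then (1:ℝ)/2 else -(1/2))) ^ (2*(j:ℕ)+1))
      = 2 ^ d * Matrix.det (Matrix.of fun i j : Fin d => x i ^ (2*(j:ℕ)+1)) := by
  classical
  have hmap := MultilinearMap.map_sum
      (f := (Matrix.detRowAlternating : (Fin d → ℝ) [⋀^Fin d]→ₗ[ℝ] ℝ).toMultilinearMap)
      (g := fun (i : Fin d) (b : Bool) =>
        fun j : Fin d => (x i + (if b then (1:ℝ)/2 else -(1/2))) ^ (2*(j:ℕ)+1))
  have step1 : ∑ ε : Fin d → Bool,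
        Matrix.det (Matrix.of fun i j : Fin d =>
          (x i + (if ε i then (1:ℝ)/2 else -(1/2))) ^ (2*(j:ℕ)+1))
      = Matrix.det (Matrix.of fun i j : Fin d =>
          (x i + 1/2) ^ (2*(j:ℕ)+1) + (x i - 1/2) ^ (2*(j:ℕ)+1)) := by
    rw [show (Matrix.det (Matrix.of fun i j : Fin d =>
          (x i + 1/2) ^ (2*(j:ℕ)+1) + (x i - 1/2) ^ (2*(j:ℕ)+1)))
        = (Matrix.detRowAlternating : (Fin d → ℝ) [⋀^Fin d]→ₗ[ℝ] ℝ).toMultilinearMap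
            (fun i => ∑ b : Bool,
              fun j : Fin d => (x i + (if b then (1:ℝ)/2 else -(1/2))) ^ (2*(j:ℕ)+1)) by
      congr 1
      funext i j
      rw [Finset.sum_apply]
      simp [Fintype.sum_bool]
      ring_nf]
    rw [hmap]
    rfl
  rw [step1]
  have hAC : (Matrix.of fun i j : Fin d =>
        (x i + 1/2) ^ (2*(j:ℕ)+1) + (x i - 1/2) ^ (2*(j:ℕ)+1))
      = (Matrix.of fun i j : Fin d => x i ^ (2*(j:ℕ)+1)) * Cmat d := by
    ext i j
    rw [Matrix.mul_apply]
    exact key_fin d (x i) j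
  rw [hAC, Matrix.det_mul, detC, mul_comm]

/-- The type `B`/`C` Weyl polynomial `H(x) = ∏_i x_i · ∏_{i<j} (x_i² - x_j²)`. -/
noncomputable def HB (d : ℕ) (x : Fin d → ℝ) : ℝ :=
  (∏ i, x i) * ∏ i, ∏ j ∈ Finset.Ioi i, ((x i) ^ 2 - (x j) ^ 2)

lemma HB_eq_det (d : ℕ) (x : Fin d → ℝ) :
    HB d x = (-1:ℝ) ^ (∑ i : Fin d, (Finset.Ioi i).card) *
      Matrix.det (Matrix.of fun i j : Fin d => x i ^ (2*(j:ℕ)+1)) := by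
  have hdet : Matrix.det (Matrix.of fun i j : Fin d => x i ^ (2*(j:ℕ)+1))
      = (∏ i, x i) * ∏ i, ∏ j ∈ Finset.Ioi i, ((x j)^2 - (x i)^2) := by
    have hM : (Matrix.of fun i j : Fin d => x i ^ (2*(j:ℕ)+1))
        = Matrix.of fun i j => x i * (Matrix.vandermonde (fun i => x i ^ 2)) i j := by
      ext i j
      simp only [Matrix.of_apply, Matrix.vandermonde_apply]
      rw [← pow_mul, ← pow_succ']
    rw [hM, Matrix.det_mul_column, Matrix.det_vandermonde]
  rw [hdet]; unfold HB
  have hsign : ∏ i : Fin d, ∏ j ∈ Finset.Ioi i, ((x i)^2 - (x j)^2)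
      = (-1:ℝ) ^ (∑ i : Fin d, (Finset.Ioi i).card) *
        ∏ i : Fin d, ∏ j ∈ Finset.Ioi i, ((x j)^2 - (x i)^2) := by
    rw [← Finset.prod_pow_eq_pow_sum, ← Finset.prod_mul_distrib]
    refine Finset.prod_congr rfl fun i _ => ?_
    rw [← Finset.prod_const, ← Finset.prod_mul_distrib]
    refine Finset.prod_congr rfl fun j _ => ?_
    ring
  rw [hsign]
  ring

/-- harmonicity of the type `B` Weyl dimension polynomial for the spin
kernel: `∑_{ε ∈ {-1/2,+1/2}^d} H(x + ε) = 2^d·H(x)` for every `x ∈ ℝ^d`. -/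
theorem stmt_16 (d : ℕ) (hd : 1 ≤ d) :
    ∀ x : Fin d → ℝ,
      ∑ ε : Fin d → Bool,
          HB d (x + fun i => if ε i then (1 : ℝ) / 2 else -(1 / 2))
        = 2 ^ d * HB d x := by
  intro x
  have h1 : ∀ ε : Fin d → Bool,
      HB d (x + fun i => if ε i then (1 : ℝ) / 2 else -(1 / 2))
        = (-1:ℝ) ^ (∑ i : Fin d, (Finset.Ioi i).card) *
          Matrix.det (Matrix.of fun i j : Fin d =>
            (x i + (if ε i then (1:ℝ)/2 else -(1/2))) ^ (2*(j:ℕ)+1)) := fun ε =>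
    HB_eq_det d _
  simp only [h1]
  rw [← Finset.mul_sum, det_sum_eps, HB_eq_det]
  ring
end
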